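/- arXiv:2508.00811 — 11 statements merged into one kernel-verified Lean document; each statement's English description precedes it below -/
import Mathlib

section
/- Let (C, N, (A_i)_{i∈N}, k) be an approval election with n = |N| and k ≥ 1, and let W ⊆ C be a committee with |W| = k. Suppose W fails Droop-EJR+, i.e., there exist ℓ ∈ {1,...,k}, a group S ⊆ N with |S| > ℓ·n/(k+1), and a candidate c ∈ (⋂_{i∈S} A_i) \ W such that |A_i ∩ W| ≤ ℓ − 1 for every i ∈ S. Then there exists w ∈ W such that pavscore((W \ {w}) ∪ {c}) ≥ pavscore(W) + 1/k². -/
/-- The PAV score of a committee `W`:  `Σ_{i∈N} Σ_{j=1}^{|A_i ∩ W|} 1/j`. -/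
def pavscore {V K : Type*} [DecidableEq K] (N : Finset V) (A : V → Finset K)
    (W : Finset K) : ℚ :=
  ∑ i ∈ N, ∑ j ∈ Finset.Icc 1 (A i ∩ W).card, (1 : ℚ) / (j : ℚ)

/-!
Average the score change over the `k` swaps `W - w + c`, `w ∈ W`. A voter with
`t = |A_i ∩ W|` loses `1/t` in each of the `t` swaps removing one of their candidates, so loses at
most `1` in total; a voter approving `c` gains `1/(t+1)` in each of the `k - t` other swaps, and the
total change is exactly `(k - t)/(t + 1) = (k + 1)/(t + 1) - 1 ≥ (k + 1)/ℓ - 1` when `t ≤ ℓ - 1`.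
Summing, the total change is at least `|S|(k+1)/ℓ - n`, which by integrality of the Droop
inequality `|S|(k+1) > ℓn` is at least `1/ℓ ≥ 1/k`; hence some swap gains at least `1/k²`.
-/

open Finset

lemma pavscore_eq_sum_harmonic {V K : Type*} [DecidableEq K] (N : Finset V) (A : V → Finset K)
    (W : Finset K) : pavscore N A W = ∑ i ∈ N, harmonic #(A i ∩ W) := by
  simp only [pavscore, harmonic_eq_sum_Icc, one_div]

section Swap

variable {K : Type*} [DecidableEq K]

lemma sum_comp_card_erase {M : Type*} [AddCommMonoid M] (f : ℕ → M) {T W : Finset K}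
    (hTW : T ⊆ W) : ∑ w ∈ W, f #(T.erase w) = (#W - #T) • f #T + #T • f (#T - 1) := by
  have hout : ∀ w ∈ W \ T, f #(T.erase w) = f #T := fun w hw => by
    rw [erase_eq_of_notMem (mem_sdiff.1 hw).2]
  have hin : ∀ w ∈ T, f #(T.erase w) = f (#T - 1) := fun w hw => by
    rw [card_erase_of_mem hw]
  rw [← sum_sdiff hTW, sum_congr rfl hout, sum_congr rfl hin, sum_const, sum_const,
    card_sdiff_of_subset hTW]

variable {a W : Finset K} {c : K}

lemma sum_harmonic_swap_sub_of_mem (hcW : c ∉ W) (hca : c ∈ a) :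
    ∑ w ∈ W, (harmonic #(a ∩ insert c (W.erase w)) - harmonic #(a ∩ W))
      = (#W - #(a ∩ W)) / (#(a ∩ W) + 1) := by
  have hcard : ∀ w, #(a ∩ insert c (W.erase w)) = #((a ∩ W).erase w) + 1 := fun w => by
    rw [inter_insert_of_mem hca, inter_erase,
      card_insert_of_notMem fun h => hcW (mem_inter.1 (mem_of_mem_erase h)).2]
  have hTW : #(a ∩ W) ≤ #W := card_le_card inter_subset_right
  simp_rw [hcard, sum_sub_distrib]
  rw [sum_comp_card_erase (fun j => harmonic (j + 1)) inter_subset_right, sum_const]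
  generalize #(a ∩ W) = t at *
  generalize #W = m at *
  obtain ⟨u, rfl⟩ := Nat.exists_eq_add_of_le hTW
  have hpred : t • harmonic (t - 1 + 1) = t • harmonic t := by rcases t with _ | t <;> simp
  rw [hpred, Nat.add_sub_cancel_left, harmonic_succ]
  simp only [nsmul_eq_mul]
  push_cast
  field_simp
  ring

lemma neg_one_le_sum_harmonic_swap_sub (hcW : c ∉ W) :
    -1 ≤ ∑ w ∈ W, (harmonic #(a ∩ insert c (W.erase w)) - harmonic #(a ∩ W)) := by
  by_cases hca : c ∈ a
  · rw [sum_harmonic_swap_sub_of_mem hcW hca]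
    have hTW : #(a ∩ W) ≤ #W := card_le_card inter_subset_right
    have : (0 : ℚ) ≤ (#W - #(a ∩ W)) / (#(a ∩ W) + 1) := by
      apply div_nonneg _ (by positivity)
      rw [sub_nonneg]; exact_mod_cast hTW
    linarith
  · simp_rw [inter_insert_of_notMem hca, inter_erase, sum_sub_distrib]
    rw [sum_comp_card_erase harmonic inter_subset_right, sum_const]
    have hTW : #(a ∩ W) ≤ #W := card_le_card inter_subset_right
    generalize #(a ∩ W) = t at *
    generalize #W = m at *
    obtain ⟨u, rfl⟩ := Nat.exists_eq_add_of_le hTW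
    rcases t with _ | t
    · simp
    · rw [Nat.add_sub_cancel_left, Nat.add_sub_cancel, harmonic_succ]
      simp only [nsmul_eq_mul]
      push_cast
      apply le_of_eq
      field_simp
      ring

end Swap

lemma one_div_le_of_droop_bound {n s k ℓ : ℕ} (hℓ : 1 ≤ ℓ) (h : (ℓ : ℚ) * n / (k + 1) < s) :
    1 / (ℓ : ℚ) ≤ s * ((k + 1) / ℓ) - n := by
  have hℓ' : (0 : ℚ) < ℓ := by exact_mod_cast hℓ
  rw [div_lt_iff₀ (by positivity)] at h
  have hnat : ℓ * n + 1 ≤ s * (k + 1) := by exact_mod_cast h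
  have hrat : (ℓ * n + 1 : ℚ) ≤ s * (k + 1) := by exact_mod_cast hnat
  rw [le_sub_iff_add_le, ← mul_div_assoc, le_div_iff₀ hℓ', add_mul,
    one_div_mul_cancel hℓ'.ne']
  linarith

lemma card_mul_sub_card_le_sum_pavscore_swap_sub {V K : Type*} [DecidableEq K]
    {N S : Finset V} {A : V → Finset K} {W : Finset K} {c : K} {ℓ : ℕ} (hℓ : 1 ≤ ℓ)
    (hSN : S ⊆ N) (hcW : c ∉ W) (hcS : ∀ i ∈ S, c ∈ A i)
    (hrep : ∀ i ∈ S, #(A i ∩ W) ≤ ℓ - 1) :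
    #S * ((#W + 1) / ℓ) - #N
      ≤ ∑ w ∈ W, (pavscore N A (insert c (W.erase w)) - pavscore N A W) := by
  classical
  have hvoter : ∀ i ∈ N, (if i ∈ S then ((#W + 1) / ℓ : ℚ) else 0) - 1
      ≤ ∑ w ∈ W, (harmonic #(A i ∩ insert c (W.erase w)) - harmonic #(A i ∩ W)) := by
    intro i _
    split_ifs with hiS
    · rw [sum_harmonic_swap_sub_of_mem hcW (hcS i hiS)]
      have hrep' : (#(A i ∩ W) + 1 : ℚ) ≤ ℓ := by
        exact_mod_cast (by have := hrep i hiS; omega : #(A i ∩ W) + 1 ≤ ℓ)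
      calc ((#W + 1) / ℓ : ℚ) - 1 ≤ (#W + 1) / (#(A i ∩ W) + 1) - 1 := by
            gcongr
        _ = (#W - #(A i ∩ W)) / (#(A i ∩ W) + 1) := by field_simp; ring
    · simpa using neg_one_le_sum_harmonic_swap_sub hcW
  calc #S * ((#W + 1) / ℓ : ℚ) - #N
      = ∑ i ∈ N, ((if i ∈ S then ((#W + 1) / ℓ : ℚ) else 0) - 1) := by
        rw [sum_sub_distrib, sum_ite_mem, inter_eq_right.2 hSN]
        simp
    _ ≤ ∑ i ∈ N, ∑ w ∈ W, (harmonic #(A i ∩ insert c (W.erase w)) - harmonic #(A i ∩ W)) :=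
        sum_le_sum hvoter
    _ = _ := by
        rw [sum_comm]
        simp only [pavscore_eq_sum_harmonic, sum_sub_distrib]

theorem stmt_1_general {V K : Type*} [DecidableEq K]
    (N : Finset V) (A : V → Finset K) (k : ℕ)
    (W : Finset K) (hWcard : W.card = k)
    (ℓ : ℕ) (hℓ1 : 1 ≤ ℓ) (hℓk : ℓ ≤ k)
    (S : Finset V) (hSN : S ⊆ N)
    (hSsize : (S.card : ℚ) > (ℓ : ℚ) * (N.card : ℚ) / ((k : ℚ) + 1))
    (c : K) (hcW : c ∉ W)
    (hcS : ∀ i ∈ S, c ∈ A i)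
    (hrep : ∀ i ∈ S, (A i ∩ W).card ≤ ℓ - 1) :
    ∃ w ∈ W,
      pavscore N A (insert c (W.erase w)) ≥ pavscore N A W + 1 / (k : ℚ) ^ 2 := by
  have hk : (0 : ℚ) < k := by exact_mod_cast (by omega : 0 < k)
  have hgain := card_mul_sub_card_le_sum_pavscore_swap_sub hℓ1 hSN hcW hcS hrep
  rw [hWcard] at hgain
  have hdroop := one_div_le_of_droop_bound hℓ1 hSsize
  have hℓk' : 1 / (k : ℚ) ≤ 1 / ℓ :=
    one_div_le_one_div_of_le (by positivity) (by exact_mod_cast hℓk)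
  have hW : W.Nonempty := card_pos.1 (by omega)
  have hsum : ∑ _w ∈ W, 1 / (k : ℚ) ^ 2
      ≤ ∑ w ∈ W, (pavscore N A (insert c (W.erase w)) - pavscore N A W) := by
    rw [sum_const, hWcard, nsmul_eq_mul]
    calc (k : ℚ) * (1 / k ^ 2) = 1 / k := by field_simp
      _ ≤ _ := by linarith
  obtain ⟨w, hw, hle⟩ := exists_le_of_sum_le hW hsum
  exact ⟨w, hw, by linarith⟩

/-- If a size-`k` committee `W` fails Droop-EJR+, as witnessed by
`ℓ`, a group `S` with `|S| > ℓ·n/(k+1)`, and a candidate `c ∈ (⋂_{i∈S} A_i) \ W`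
with `|A_i ∩ W| ≤ ℓ − 1` for every `i ∈ S`, then there is a candidate `w ∈ W`
such that swapping `w` for `c` increases the PAV score by at least `1/k²`. -/
theorem stmt_1 {V K : Type*} [DecidableEq V] [DecidableEq K]
    (N : Finset V) (C : Finset K) (A : V → Finset K) (k : ℕ)
    (hA : ∀ i ∈ N, A i ⊆ C) (hk : 1 ≤ k)
    (W : Finset K) (hWC : W ⊆ C) (hWcard : W.card = k)
    (ℓ : ℕ) (hℓ1 : 1 ≤ ℓ) (hℓk : ℓ ≤ k)
    (S : Finset V) (hSN : S ⊆ N)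
    (hSsize : (S.card : ℚ) > (ℓ : ℚ) * (N.card : ℚ) / ((k : ℚ) + 1))
    (c : K) (hcC : c ∈ C) (hcW : c ∉ W)
    (hcS : ∀ i ∈ S, c ∈ A i)
    (hrep : ∀ i ∈ S, (A i ∩ W).card ≤ ℓ - 1) :
    ∃ w ∈ W,
      pavscore N A (insert c (W.erase w)) ≥ pavscore N A W + 1 / (k : ℚ) ^ 2 :=
  stmt_1_general N A k W hWcard ℓ hℓ1 hℓk S hSN hSsize c hcW hcS hrep
end

section
/- Let (C, N, (A_i)_{i∈N}, k) be an approval election with n = |N| and k ≥ 1, and let W ⊆ C with |W| = k be such that pavscore(W') ≤ pavscore(W) for every W' ⊆ C with |W'| = k. Then W provides Droop-EJR+. -/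
/-- An outcome `W` provides Droop-EJR+ if there is no `ℓ ∈ {1,...,k}`, group
`S ⊆ N` with `|S| > ℓ·n/(k+1)`, and candidate `c ∈ (⋂_{i∈S} A_i) \ W` such that
`|A_i ∩ W| ≤ ℓ − 1` for every `i ∈ S`. -/
def DroopEJRplus {V K : Type*} [DecidableEq K]
    (N : Finset V) (C : Finset K) (A : V → Finset K) (k : ℕ) (W : Finset K) : Prop :=
  ¬ ∃ ℓ : ℕ, 1 ≤ ℓ ∧ ℓ ≤ k ∧ ∃ S ⊆ N,
      (S.card : ℚ) > (ℓ : ℚ) * (N.card : ℚ) / ((k : ℚ) + 1) ∧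
      ∃ c ∈ C, c ∉ W ∧ (∀ i ∈ S, c ∈ A i) ∧ ∀ i ∈ S, (A i ∩ W).card ≤ ℓ - 1

/-!
Suppose a group `S` witnesses a violation of Droop-EJR+ with candidate `c` and level `ℓ`.
Adding `c` to `W` raises the PAV score by at least `|S|/ℓ`, since each voter of `S` gains
at least `1/ℓ`. In `W' = W ∪ {c}` the marginal contributions of all members sum to at most `n`
(voter `i` contributes `|A_i ∩ W'| · 1/|A_i ∩ W'| ≤ 1`), so those of the `k` members of `W`
sum to at most `n - |S|/ℓ`, and some `w ∈ W` contributes at most `(n - |S|/ℓ)/k`. The Droop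
quota `|S|/ℓ > n/(k+1)` is exactly what makes this smaller than `|S|/ℓ`, so swapping `w`
for `c` strictly increases the PAV score.
-/

namespace PAV

variable {V K : Type*} [DecidableEq K] (N : Finset V) (A : V → Finset K)

def marginal (W : Finset K) (c : K) : ℚ :=
  ∑ i ∈ N, if c ∈ A i then (1 : ℚ) / (A i ∩ W).card else 0

theorem pavscore_insert {W : Finset K} {c : K} (hc : c ∉ W) :
    pavscore N A (insert c W) = pavscore N A W + marginal N A (insert c W) c := by
  unfold pavscore marginal
  rw [← Finset.sum_add_distrib]
  refine Finset.sum_congr rfl fun i _ => ?_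
  by_cases hci : c ∈ A i
  · have hcard : (A i ∩ insert c W).card = (A i ∩ W).card + 1 := by
      rw [Finset.inter_insert_of_mem hci,
        Finset.card_insert_of_notMem fun h => hc (Finset.mem_inter.mp h).2]
    rw [if_pos hci, hcard, Finset.sum_Icc_succ_top (Nat.le_add_left 1 _)]
  · rw [if_neg hci, Finset.inter_insert_of_notMem hci, add_zero]

theorem pavscore_eq_erase_add_marginal {W : Finset K} {w : K} (hw : w ∈ W) :
    pavscore N A W = pavscore N A (W.erase w) + marginal N A W w := by
  simpa only [Finset.insert_erase hw] using
    pavscore_insert N A (Finset.notMem_erase w W)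

theorem sum_marginal_le_card (W : Finset K) :
    ∑ w ∈ W, marginal N A W w ≤ N.card := by
  unfold marginal
  rw [Finset.sum_comm, ← nsmul_one, ← Finset.sum_const]
  refine Finset.sum_le_sum fun i _ => ?_
  rw [Finset.sum_ite_mem, Finset.sum_const, nsmul_eq_mul, Finset.inter_comm, mul_one_div]
  exact div_self_le_one _

theorem card_div_le_marginal_insert {W : Finset K} {S : Finset V} {c : K} {ℓ : ℕ}
    (hS : S ⊆ N) (hcS : ∀ i ∈ S, c ∈ A i) (hSW : ∀ i ∈ S, (A i ∩ W).card ≤ ℓ - 1)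
    (hℓ : 1 ≤ ℓ) : (S.card : ℚ) / ℓ ≤ marginal N A (insert c W) c := by
  have hvoter : ∀ i ∈ S, (1 : ℚ) / ℓ ≤ (1 : ℚ) / (A i ∩ insert c W).card := by
    intro i hi
    have hpos : 0 < (A i ∩ insert c W).card :=
      Finset.card_pos.mpr ⟨c, Finset.mem_inter.mpr ⟨hcS i hi, Finset.mem_insert_self c W⟩⟩
    have hle : (A i ∩ insert c W).card ≤ ℓ := by
      rw [Finset.inter_insert_of_mem (hcS i hi)]
      have := Finset.card_insert_le c (A i ∩ W)
      have := hSW i hi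
      omega
    exact one_div_le_one_div_of_le (by exact_mod_cast hpos) (by exact_mod_cast hle)
  calc (S.card : ℚ) / ℓ = ∑ i ∈ S, (1 : ℚ) / ℓ := by
        rw [Finset.sum_const, nsmul_eq_mul, mul_one_div]
    _ ≤ ∑ i ∈ S, if c ∈ A i then (1 : ℚ) / (A i ∩ insert c W).card else 0 :=
        Finset.sum_le_sum fun i hi => by simpa only [if_pos (hcS i hi)] using hvoter i hi
    _ ≤ marginal N A (insert c W) c :=
        Finset.sum_le_sum_of_subset_of_nonneg hS fun i _ _ => by positivity

theorem exists_marginal_insert_mul_card_le {W : Finset K} {c : K} (hc : c ∉ W)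
    (hW : W.Nonempty) : ∃ w ∈ W,
      marginal N A (insert c W) w * W.card ≤ N.card - marginal N A (insert c W) c := by
  have hsum : ∑ w ∈ W, marginal N A (insert c W) w ≤ N.card - marginal N A (insert c W) c := by
    have := sum_marginal_le_card N A (insert c W)
    rw [Finset.sum_insert hc] at this
    linarith
  have hcard : (0 : ℚ) < W.card := by exact_mod_cast hW.card_pos
  refine Finset.exists_le_of_sum_le hW ?_
  rw [← Finset.sum_mul, Finset.sum_const, nsmul_eq_mul, mul_comm (W.card : ℚ)]
  exact mul_le_mul_of_nonneg_right hsum hcard.le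

end PAV

theorem stmt_2_general {V K : Type*} [DecidableEq K]
    (N : Finset V) (C : Finset K) (A : V → Finset K) (k : ℕ)
    (W : Finset K) (hWC : W ⊆ C) (hWcard : W.card = k)
    (hmax : ∀ W' ⊆ C, W'.card = k → pavscore N A W' ≤ pavscore N A W) :
    DroopEJRplus N C A k W := by
  rintro ⟨ℓ, hℓ1, hℓk, S, hSN, hScard, c, hcC, hcW, hcS, hSW⟩
  have hk : (0 : ℚ) < k := by exact_mod_cast hℓ1.trans hℓk
  have hWne : W.Nonempty := Finset.card_pos.mp (by omega)
  obtain ⟨w, hwW, hw⟩ := PAV.exists_marginal_insert_mul_card_le N A hcW hWne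
  have hgain := PAV.card_div_le_marginal_insert N A hSN hcS hSW hℓ1
  have hquota : (N.card : ℚ) < S.card / ℓ * (k + 1) := by
    have hℓ : (0 : ℚ) < ℓ := by exact_mod_cast hℓ1
    rw [gt_iff_lt, div_lt_iff₀ (by positivity)] at hScard
    rw [div_mul_eq_mul_div, lt_div_iff₀ hℓ]
    linarith
  have hswap := hmax ((insert c W).erase w)
    ((Finset.erase_subset w _).trans (Finset.insert_subset hcC hWC))
    (by rw [Finset.card_erase_of_mem (Finset.mem_insert_of_mem hwW),
      Finset.card_insert_of_notMem hcW, hWcard, Nat.add_sub_cancel])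
  have hscore := PAV.pavscore_insert N A hcW
  rw [PAV.pavscore_eq_erase_add_marginal N A (Finset.mem_insert_of_mem hwW)] at hscore
  rw [hWcard] at hw
  have hlt : PAV.marginal N A (insert c W) w < PAV.marginal N A (insert c W) c := by
    have := mul_le_mul_of_nonneg_right hgain (by positivity : (0 : ℚ) ≤ k + 1)
    exact lt_of_mul_lt_mul_right (by linarith) hk.le
  linarith

/-- A size-`k` committee maximizing the PAV score among all
size-`k` committees provides Droop-EJR+. -/
theorem stmt_2 {V K : Type*} [DecidableEq V] [DecidableEq K]
    (N : Finset V) (C : Finset K) (A : V → Finset K) (k : ℕ)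
    (hA : ∀ i ∈ N, A i ⊆ C) (hk : 1 ≤ k)
    (W : Finset K) (hWC : W ⊆ C) (hWcard : W.card = k)
    (hmax : ∀ W' ⊆ C, W'.card = k → pavscore N A W' ≤ pavscore N A W) :
    DroopEJRplus N C A k W :=
  stmt_2_general N C A k W hWC hWcard hmax
end

section
/- Consider the approval election with candidate set C = {c₁, c₂, c₃}, voter set N = {1, 2}, ballots A₁ = {c₁, c₂} and A₂ = {c₁, c₃}, and target committee size k = 2. The committee W = {c₂, c₃} provides Droop-FJR but does not provide Droop-EJR+. -/
/-- A group `S ⊆ N` is Droop weakly `(ℓ,T)`-cohesive if `|A_i ∩ T| ≥ ℓ` for every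
`i ∈ S` and `|S| > |T|·n/(k+1)`.  An outcome `W` provides Droop-FJR if for every
`ℓ ∈ {1,...,k}`, every `T ⊆ C`, and every Droop weakly `(ℓ,T)`-cohesive group `S`,
there exists `i ∈ S` with `|A_i ∩ W| ≥ ℓ`. -/
def DroopFJR {V K : Type*} [DecidableEq K]
    (N : Finset V) (C : Finset K) (A : V → Finset K) (k : ℕ) (W : Finset K) : Prop :=
  ∀ ℓ : ℕ, 1 ≤ ℓ → ℓ ≤ k → ∀ T ⊆ C, ∀ S ⊆ N,
    (∀ i ∈ S, ℓ ≤ (A i ∩ T).card) →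
    (S.card : ℚ) > (T.card : ℚ) * (N.card : ℚ) / ((k : ℚ) + 1) →
    ∃ i ∈ S, ℓ ≤ (A i ∩ W).card

/-- In the election with candidates `C = {c₁, c₂, c₃}`, voters
`N = {1, 2}`, ballots `A₁ = {c₁, c₂}`, `A₂ = {c₁, c₃}`, and `k = 2`, the
committee `W = {c₂, c₃}` provides Droop-FJR but not Droop-EJR+.
(Candidate `cⱼ` is encoded as `j - 1 : Fin 3`.) -/
theorem stmt_3 :
    DroopFJR (Finset.univ : Finset (Fin 2)) (Finset.univ : Finset (Fin 3))
      ![{0, 1}, {0, 2}] 2 ({1, 2} : Finset (Fin 3)) ∧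
    ¬ DroopEJRplus (Finset.univ : Finset (Fin 2)) (Finset.univ : Finset (Fin 3))
      ![{0, 1}, {0, 2}] 2 ({1, 2} : Finset (Fin 3)) := by
  constructor
  · intro ℓ h1 h2 T hT S hS hcoh hcard
    have hcard' : 2 * T.card < 3 * S.card := by
      push_cast [Finset.card_univ, Fintype.card_fin] at hcard
      rw [gt_iff_lt, div_lt_iff₀ (by norm_num : (0:ℚ) < (2:ℚ)+1)] at hcard
      have : (2 * T.card : ℚ) < 3 * S.card := by linarith
      exact_mod_cast this
    clear hT hS hcard
    revert hcoh hcard'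
    revert S T
    interval_cases ℓ <;> decide
  · intro h
    apply h
    refine ⟨2, by norm_num, by norm_num, Finset.univ, Finset.Subset.refl _, ?_, 0, ?_, ?_, ?_, ?_⟩
    · norm_num
    · decide
    · decide
    · decide
    · decide
end

section
/- Let (C, N, (A_i)_{i∈N}, k) be an approval election with n = |N| and k ≥ 1, and let W ⊆ C with |W| = k be a priceable committee, i.e., a committee supported by some price system. Then W provides Droop-FPJR. -/
/-- A group `S ⊆ N` is Droop weakly `(ℓ,T)`-cohesive if `|A_i ∩ T| ≥ ℓ` for every
`i ∈ S` and `|S| > |T|·n/(k+1)`.  An outcome `W` provides Droop-FPJR if for every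
`ℓ ∈ {1,...,k}`, every `T ⊆ C`, and every Droop weakly `(ℓ,T)`-cohesive group `S`,
we have `|(⋃_{i∈S} A_i) ∩ W| ≥ ℓ`. -/
def DroopFPJR {V K : Type*} [DecidableEq V] [DecidableEq K]
    (N : Finset V) (C : Finset K) (A : V → Finset K) (k : ℕ) (W : Finset K) : Prop :=
  ∀ ℓ : ℕ, 1 ≤ ℓ → ℓ ≤ k → ∀ T ⊆ C, ∀ S ⊆ N,
    (∀ i ∈ S, ℓ ≤ (A i ∩ T).card) →
    (S.card : ℚ) > (T.card : ℚ) * (N.card : ℚ) / ((k : ℚ) + 1) →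
    ℓ ≤ ((S.biUnion A) ∩ W).card


private lemma stmt5_arith (p P L m μ ℓ t k n : ℚ) (hp : 0 < p)
    (hP : P ≤ m * p) (hL : L ≤ n - k * p)
    (hDC : (ℓ - μ) * L ≤ (t - μ) * p) (hLnn : 0 ≤ L) (hPnn : 0 ≤ P)
    (hm : m + 1 ≤ ℓ) (hμ : μ ≤ m) (hμ0 : 0 ≤ μ) (ht : ℓ ≤ t) (hk : ℓ ≤ k)
    (hℓ : 1 ≤ ℓ) (hn : 0 ≤ n) (hbig : t * n < (P + L) * (k + 1)) : False := by
  rcases le_or_gt (p * (k + 1)) n with hcase | hcase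
  · have h1 : 0 < ℓ - μ := by linarith
    have hq : t - μ ≤ (t - m) * (ℓ - μ) := by
      nlinarith [mul_nonneg (show (0:ℚ) ≤ t - ℓ by linarith)
          (show (0:ℚ) ≤ ℓ - μ - 1 by linarith),
        mul_nonneg (show (0:ℚ) ≤ ℓ - m - 1 by linarith)
          (show (0:ℚ) ≤ ℓ - μ - 1 by linarith)]
    have hL2 : L ≤ (t - m) * p := by
      have h4 : L * (ℓ - μ) ≤ ((t - m) * p) * (ℓ - μ) := by
        nlinarith [mul_le_mul_of_nonneg_right hq hp.le]
      exact le_of_mul_le_mul_right h4 h1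
    have hPL : P + L ≤ t * p := by linarith
    have h5 : (P + L) * (k + 1) ≤ (t * p) * (k + 1) :=
      mul_le_mul_of_nonneg_right hPL (by linarith)
    have h7 : t * (p * (k + 1)) ≤ t * n :=
      mul_le_mul_of_nonneg_left hcase (by linarith)
    nlinarith
  · have hPL : P + L ≤ m * p + n - k * p := by linarith
    have h5 : (P + L) * (k + 1) ≤ (m * p + n - k * p) * (k + 1) :=
      mul_le_mul_of_nonneg_right hPL (by linarith)
    have h6 : (k - m) * n < (k - m) * (p * (k + 1)) :=
      mul_lt_mul_of_pos_left hcase (by linarith)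
    have h8 : (m + 1) * n ≤ t * n :=
      mul_le_mul_of_nonneg_right (show m + 1 ≤ t by linarith) hn
    nlinarith

/-- Every priceable committee `W` of size `k` provides
Droop-FPJR.  Here the price system `(p, (pay i)_{i∈N})` satisfies: payments are
nonnegative, voters only pay for candidates they approve, each voter's total
payment is at most `1`; and it supports `W`: each elected candidate's payments
sum to `p`, no voter pays for an unelected candidate, and for every unelected
candidate the leftover budget of its supporters is at most `p`. -/
theorem stmt_5 {V K : Type*} [DecidableEq V] [DecidableEq K]
    (N : Finset V) (C : Finset K) (A : V → Finset K) (k : ℕ)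
    (hA : ∀ i ∈ N, A i ⊆ C) (hk : 1 ≤ k)
    (W : Finset K) (hWC : W ⊆ C) (hWcard : W.card = k)
    (p : ℚ) (pay : V → K → ℚ)
    (hp : 0 < p)
    (hnonneg : ∀ i ∈ N, ∀ c ∈ C, 0 ≤ pay i c)
    (honlyApproved : ∀ i ∈ N, ∀ c ∈ C, c ∉ A i → pay i c = 0)
    (hbudget : ∀ i ∈ N, ∑ c ∈ C, pay i c ≤ 1)
    (hpaysum : ∀ c ∈ W, ∑ i ∈ N, pay i c = p)
    (honlyW : ∀ i ∈ N, ∀ c ∈ C, c ∉ W → pay i c = 0)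
    (hleftover : ∀ c ∈ C, c ∉ W →
      ∑ i ∈ N.filter (fun i => c ∈ A i), (1 - ∑ c' ∈ W, pay i c') ≤ p) :
    DroopFPJR N C A k W := by
  intro ℓ hℓ1 hℓk T hT S hSN hcoh hbig
  by_contra hcon
  push_neg at hcon
  -- `W'` is the set of elected candidates approved by someone in `S`
  set W' : Finset K := (S.biUnion A) ∩ W with hW'def
  have hW'W : W' ⊆ W := Finset.inter_subset_right
  have hm : W'.card + 1 ≤ ℓ := hcon
  -- S is nonempty
  have hSne : S.Nonempty := by
    rw [Finset.nonempty_iff_ne_empty]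
    intro h
    rw [h] at hbig
    have h0 : (0:ℚ) ≤ (T.card : ℚ) * (N.card : ℚ) / ((k : ℚ) + 1) := by positivity
    simp at hbig
    linarith
  obtain ⟨i0, hi0S⟩ := hSne
  have htℓ : ℓ ≤ T.card :=
    le_trans (hcoh i0 hi0S) (Finset.card_le_card Finset.inter_subset_right)
  -- payments over W equal payments over C
  have hpayC : ∀ i ∈ N, ∑ c ∈ W, pay i c = ∑ c ∈ C, pay i c := fun i hi =>
    Finset.sum_subset hWC (fun c hc hcW => honlyW i hi c hc hcW)
  -- leftover budget is nonnegative
  have hleft0 : ∀ i ∈ N, 0 ≤ 1 - ∑ c ∈ W, pay i c := by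
    intro i hi
    have := hbudget i hi
    rw [hpayC i hi]
    linarith
  -- members of S only pay for candidates in W'
  have hSonlyW' : ∀ i ∈ S, ∑ c ∈ W, pay i c = ∑ c ∈ W', pay i c := by
    intro i hi
    refine (Finset.sum_subset hW'W ?_).symm
    intro c hcW hcW'
    refine honlyApproved i (hSN hi) c (hWC hcW) ?_
    intro hcA
    exact hcW' (Finset.mem_inter.mpr ⟨Finset.mem_biUnion.mpr ⟨i, hi, hcA⟩, hcW⟩)
  -- total payment by S is at most |W'| * p
  have hPS : ∑ i ∈ S, ∑ c ∈ W, pay i c ≤ (W'.card : ℚ) * p := by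
    calc ∑ i ∈ S, ∑ c ∈ W, pay i c = ∑ i ∈ S, ∑ c ∈ W', pay i c :=
          Finset.sum_congr rfl hSonlyW'
      _ = ∑ c ∈ W', ∑ i ∈ S, pay i c := Finset.sum_comm
      _ ≤ ∑ c ∈ W', ∑ i ∈ N, pay i c := by
          refine Finset.sum_le_sum (fun c hc => ?_)
          exact Finset.sum_le_sum_of_subset_of_nonneg hSN
            (fun i hi _ => hnonneg i hi c (hWC (hW'W hc)))
      _ = ∑ c ∈ W', p := Finset.sum_congr rfl (fun c hc => hpaysum c (hW'W hc))
      _ = (W'.card : ℚ) * p := by rw [Finset.sum_const, nsmul_eq_mul]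
  -- total payment by all voters equals k * p
  have hPN : ∑ i ∈ N, ∑ c ∈ W, pay i c = (k : ℚ) * p := by
    rw [Finset.sum_comm]
    have : ∀ c ∈ W, ∑ i ∈ N, pay i c = p := hpaysum
    rw [Finset.sum_congr rfl this, Finset.sum_const, nsmul_eq_mul, hWcard]
  -- total leftover of S is at most n - k*p
  have hLN : ∑ i ∈ S, (1 - ∑ c ∈ W, pay i c) ≤ (N.card : ℚ) - (k : ℚ) * p := by
    calc ∑ i ∈ S, (1 - ∑ c ∈ W, pay i c)
        ≤ ∑ i ∈ N, (1 - ∑ c ∈ W, pay i c) :=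
          Finset.sum_le_sum_of_subset_of_nonneg hSN (fun i hi _ => hleft0 i hi)
      _ = (N.card : ℚ) - (k : ℚ) * p := by
          rw [Finset.sum_sub_distrib, hPN, Finset.sum_const, nsmul_eq_mul, mul_one]
  set μ : ℕ := (W' ∩ T).card with hμdef
  have hμm : μ ≤ W'.card := Finset.card_le_card Finset.inter_subset_left
  -- every member of S approves at least ℓ - μ candidates in T \ W
  have hcount : ∀ i ∈ S, ℓ ≤ μ + (A i ∩ (T \ W)).card := by
    intro i hi
    have hsub : A i ∩ T ⊆ (W' ∩ T) ∪ (A i ∩ (T \ W)) := by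
      intro c hc
      rw [Finset.mem_inter] at hc
      by_cases hcW : c ∈ W
      · exact Finset.mem_union_left _ (Finset.mem_inter.mpr
          ⟨Finset.mem_inter.mpr ⟨Finset.mem_biUnion.mpr ⟨i, hi, hc.1⟩, hcW⟩, hc.2⟩)
      · exact Finset.mem_union_right _ (Finset.mem_inter.mpr
          ⟨hc.1, Finset.mem_sdiff.mpr ⟨hc.2, hcW⟩⟩)
    calc ℓ ≤ (A i ∩ T).card := hcoh i hi
      _ ≤ ((W' ∩ T) ∪ (A i ∩ (T \ W))).card := Finset.card_le_card hsub
      _ ≤ μ + (A i ∩ (T \ W)).card := Finset.card_union_le _ _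
  -- double counting of leftovers over candidates in T \ W
  have hswap : ∑ c ∈ T \ W, ∑ i ∈ S.filter (fun i => c ∈ A i), (1 - ∑ c' ∈ W, pay i c')
      = ∑ i ∈ S, ((A i ∩ (T \ W)).card : ℚ) * (1 - ∑ c' ∈ W, pay i c') := by
    have h1 : ∀ c ∈ T \ W, ∑ i ∈ S.filter (fun i => c ∈ A i), (1 - ∑ c' ∈ W, pay i c')
        = ∑ i ∈ S, if c ∈ A i then (1 - ∑ c' ∈ W, pay i c') else 0 := by
      intro c _
      rw [Finset.sum_filter]
    rw [Finset.sum_congr rfl h1, Finset.sum_comm]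
    refine Finset.sum_congr rfl (fun i _ => ?_)
    rw [← Finset.sum_filter, Finset.sum_const, nsmul_eq_mul]
    congr 2
    rw [Finset.filter_mem_eq_inter, Finset.inter_comm]
  have hDClow : ((ℓ : ℚ) - (μ : ℚ)) * ∑ i ∈ S, (1 - ∑ c' ∈ W, pay i c')
      ≤ ∑ i ∈ S, ((A i ∩ (T \ W)).card : ℚ) * (1 - ∑ c' ∈ W, pay i c') := by
    rw [Finset.mul_sum]
    refine Finset.sum_le_sum (fun i hi => ?_)
    have hL0 : 0 ≤ 1 - ∑ c' ∈ W, pay i c' := hleft0 i (hSN hi)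
    have hcard : ((ℓ : ℚ) - (μ : ℚ)) ≤ ((A i ∩ (T \ W)).card : ℚ) := by
      have := hcount i hi
      have : (ℓ : ℚ) ≤ (μ : ℚ) + ((A i ∩ (T \ W)).card : ℚ) := by
        exact_mod_cast this
      linarith
    exact mul_le_mul_of_nonneg_right hcard hL0
  have hDChigh : ∑ c ∈ T \ W, ∑ i ∈ S.filter (fun i => c ∈ A i), (1 - ∑ c' ∈ W, pay i c')
      ≤ ((T.card : ℚ) - (μ : ℚ)) * p := by
    have hstep : ∀ c ∈ T \ W, ∑ i ∈ S.filter (fun i => c ∈ A i), (1 - ∑ c' ∈ W, pay i c') ≤ p := by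
      intro c hc
      rw [Finset.mem_sdiff] at hc
      refine le_trans ?_ (hleftover c (hT hc.1) hc.2)
      refine Finset.sum_le_sum_of_subset_of_nonneg
        (Finset.filter_subset_filter _ hSN) (fun i hi _ => ?_)
      exact hleft0 i (Finset.mem_of_mem_filter i hi)
    calc ∑ c ∈ T \ W, ∑ i ∈ S.filter (fun i => c ∈ A i), (1 - ∑ c' ∈ W, pay i c')
        ≤ ∑ _c ∈ T \ W, p := Finset.sum_le_sum hstep
      _ = ((T \ W).card : ℚ) * p := by rw [Finset.sum_const, nsmul_eq_mul]
      _ ≤ ((T.card : ℚ) - (μ : ℚ)) * p := by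
          refine mul_le_mul_of_nonneg_right ?_ (le_of_lt hp)
          have h1 : (T \ W).card + (T ∩ W).card = T.card := Finset.card_sdiff_add_card_inter T W
          have h2 : μ ≤ (T ∩ W).card := by
            refine Finset.card_le_card ?_
            intro c hc
            rw [Finset.mem_inter] at hc ⊢
            exact ⟨hc.2, hW'W hc.1⟩
          have h3 : (T \ W).card + μ ≤ T.card := by omega
          have h4 : (((T \ W).card : ℚ)) + (μ : ℚ) ≤ (T.card : ℚ) := by exact_mod_cast h3
          linarith
  have hDC : ((ℓ : ℚ) - (μ : ℚ)) * ∑ i ∈ S, (1 - ∑ c' ∈ W, pay i c')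
      ≤ ((T.card : ℚ) - (μ : ℚ)) * p := by
    rw [← hswap] at hDClow
    linarith
  -- abbreviations
  set P : ℚ := ∑ i ∈ S, ∑ c ∈ W, pay i c with hPdef
  set L : ℚ := ∑ i ∈ S, (1 - ∑ c ∈ W, pay i c) with hLdef
  have hcardS : (S.card : ℚ) = P + L := by
    rw [hPdef, hLdef, ← Finset.sum_add_distrib]
    have h1 : ∀ i ∈ S, (∑ c ∈ W, pay i c) + (1 - ∑ c ∈ W, pay i c) = 1 :=
      fun i _ => by ring
    rw [Finset.sum_congr rfl h1, Finset.sum_const, nsmul_eq_mul, mul_one]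
  have hLnn : 0 ≤ L := Finset.sum_nonneg (fun i hi => hleft0 i (hSN hi))
  have hPnn : 0 ≤ P :=
    Finset.sum_nonneg (fun i hi => Finset.sum_nonneg
      (fun c hc => hnonneg i (hSN hi) c (hWC hc)))
  -- recast everything in ℚ
  have hmQ : (W'.card : ℚ) + 1 ≤ (ℓ : ℚ) := by exact_mod_cast hm
  have hμQ : (μ : ℚ) ≤ (W'.card : ℚ) := by exact_mod_cast hμm
  have htQ : (ℓ : ℚ) ≤ (T.card : ℚ) := by exact_mod_cast htℓ
  have hkQ : (ℓ : ℚ) ≤ (k : ℚ) := by exact_mod_cast hℓk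
  have hℓQ : (1 : ℚ) ≤ (ℓ : ℚ) := by exact_mod_cast hℓ1
  have hnQ : (0 : ℚ) ≤ (N.card : ℚ) := by positivity
  have hk1 : (0 : ℚ) < (k : ℚ) + 1 := by positivity
  rw [gt_iff_lt, div_lt_iff₀ hk1] at hbig
  rw [hcardS] at hbig
  -- final contradiction, by cases on whether p*(k+1) ≤ n
  have hμ0 : (0 : ℚ) ≤ (μ : ℚ) := by positivity
  exact stmt5_arith p P L (W'.card : ℚ) (μ : ℚ) (ℓ : ℚ) (T.card : ℚ) (k : ℚ)
    (N.card : ℚ) hp hPS hLN hDC hLnn hPnn hmQ hμQ hμ0 htQ hkQ hℓQ hnQ hbig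
end

section
/- Let (C, N, (A_i)_{i∈N}, k) be an approval election with n = |N|, k ≥ 1, and (k+1) dividing n. Let (W, π) be a Droop valid assignment whose Monroe score is maximal among all Droop valid assignments for this election. If S ⊆ N is a group with |S| > n/(k+1) such that π(i) ∉ A_i for every i ∈ S, then ⋂_{i∈S} A_i ⊆ W. -/
/-!
Suppose some `c ∉ W` is approved by every voter of `S`. Since `|S|` exceeds the quota
`q = n/(k+1)`, some `i₀ ∈ S` is assigned to a real winner `w`. Pick `T ⊆ S` with `i₀ ∈ T` and
`|T| = q`, permute the voters so that `T` becomes the class of `w` (nobody outside `T` and that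
class moves), and then replace `w` by `c`. The result is again Droop valid; every voter of `T` is
now happy, and had been unhappy, while only the old class of `w` minus `T` can lose, fewer than `q`
voters because `i₀` lies in both. This contradicts the maximality of the Monroe score.
-/

open Finset Equiv

namespace Equiv.Perm

variable {V : Type*}

theorem card_filter_comp_of_mapsTo {N : Finset V} {σ : Perm V} (hσ : ∀ i ∈ N, σ i ∈ N)
    (p : V → Prop) [DecidablePred p] : #{i ∈ N | p (σ i)} = #{i ∈ N | p i} := by
  have hN : N.map σ.toEmbedding = N :=
    map_eq_of_subset fun _ hj => by
      obtain ⟨i, hi, rfl⟩ := mem_map.mp hj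
      exact hσ i hi
  conv_rhs => rw [← hN, filter_map, card_map]
  rfl

theorem exists_mapsTo_of_card_eq [DecidableEq V] {T B : Finset V} (h : #T = #B) :
    ∃ σ : Perm V, (∀ i ∈ T, σ i ∈ B) ∧ (∀ i ∈ T ∪ B, σ i ∈ T ∪ B) ∧
      ∀ i ∉ T ∪ B, σ i = i := by
  have hcard (s : Finset V) (hs : s ⊆ T ∪ B) : #(s.subtype (· ∈ T ∪ B)) = #s := by
    rw [card_subtype, filter_true_of_mem hs]
  obtain ⟨σ₀, hσ₀⟩ := exists_map_finset_eq (T.subtype (· ∈ T ∪ B)) (B.subtype (· ∈ T ∪ B))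
    (by rw [hcard T subset_union_left, hcard B subset_union_right, h])
  refine ⟨ofSubtype σ₀, fun i hi => ?_, fun i hi => (ofSubtype_apply_mem_iff_mem σ₀ i).mpr hi,
    fun i hi => ofSubtype_apply_of_not_mem σ₀ hi⟩
  have hiTB : i ∈ T ∪ B := mem_union_left B hi
  have : σ₀ ⟨i, hiTB⟩ ∈ B.subtype (· ∈ T ∪ B) :=
    hσ₀ ▸ mem_map_of_mem _ (by simpa using hi)
  rw [ofSubtype_apply_of_mem σ₀ hiTB]
  simpa using this

end Equiv.Perm

section Monroe

variable {V K : Type*} [DecidableEq K]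

def IsDroopValid (N : Finset V) (C : Finset K) (k : ℕ) (d : K) (W : Finset K) (π : V → K) :
    Prop :=
  W ⊆ C ∧ #W = k ∧ (∀ i ∈ N, π i ∈ insert d W) ∧
    ∀ c ∈ insert d W, #{i ∈ N | π i = c} = #N / (k + 1)

def monroeScore (N : Finset V) (A : V → Finset K) (π : V → K) : ℕ :=
  #{i ∈ N | π i ∈ A i}

variable {N : Finset V} {C : Finset K} {A : V → Finset K} {k : ℕ} {d : K} {W : Finset K}
  {π : V → K}

theorem IsDroopValid.map_perm (hv : IsDroopValid N C k d W π) {τ : Perm K} (hτd : τ d = d)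
    (hτC : ∀ c ∈ W, τ c ∈ C) {σ : Perm V} (hσ : ∀ i ∈ N, σ i ∈ N) :
    IsDroopValid N C k d (W.map τ.toEmbedding) (fun i => τ (π (σ i))) := by
  obtain ⟨-, hWk, hπ, hq⟩ := hv
  have hins : insert d (W.map τ.toEmbedding) = (insert d W).map τ.toEmbedding := by
    rw [map_insert, toEmbedding_apply, hτd]
  refine ⟨fun x hx => ?_, (card_map _).trans hWk, fun i hi => ?_, ?_⟩
  · obtain ⟨c, hc, rfl⟩ := mem_map.mp hx
    exact hτC c hc
  · rw [hins]
    exact mem_map_of_mem _ (hπ _ (hσ i hi))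
  · rw [hins]
    intro x hx
    obtain ⟨c, hc, rfl⟩ := mem_map.mp hx
    simp only [toEmbedding_apply, τ.apply_eq_iff_eq]
    rw [Perm.card_filter_comp_of_mapsTo hσ (π · = c)]
    exact hq c hc

theorem monroeScore_lt_of_reassign [DecidableEq V] {T B : Finset V} {π' : V → K}
    (hTN : T ⊆ N) (hagree : ∀ i ∈ N, i ∉ T ∪ B → π' i = π i)
    (hhappy : ∀ i ∈ T, π' i ∈ A i) (hunhappy : ∀ i ∈ T, π i ∉ A i) (hlt : #(B \ T) < #T) :
    monroeScore N A π < monroeScore N A π' := by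
  set R := {i ∈ N | π i ∈ A i} \ (T ∪ B)
  have hold : {i ∈ N | π i ∈ A i} ⊆ R ∪ (B \ T) := by
    intro i hi
    by_cases hiTB : i ∈ T ∪ B
    · have hiT : i ∉ T := fun hiT => hunhappy i hiT (mem_filter.mp hi).2
      exact mem_union_right _ (mem_sdiff.mpr ⟨(mem_union.mp hiTB).resolve_left hiT, hiT⟩)
    · exact mem_union_left _ (mem_sdiff.mpr ⟨hi, hiTB⟩)
  have hnew : R ∪ T ⊆ {i ∈ N | π' i ∈ A i} := by
    refine union_subset (fun i hi => ?_) fun i hi => mem_filter.mpr ⟨hTN hi, hhappy i hi⟩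
    obtain ⟨hi, hiTB⟩ := mem_sdiff.mp hi
    obtain ⟨hiN, hiA⟩ := mem_filter.mp hi
    exact mem_filter.mpr ⟨hiN, hagree i hiN hiTB ▸ hiA⟩
  have hRT : Disjoint R T := disjoint_left.mpr fun i hi hiT =>
    (mem_sdiff.mp hi).2 (mem_union_left _ hiT)
  calc monroeScore N A π ≤ #(R ∪ (B \ T)) := card_le_card hold
    _ ≤ #R + #(B \ T) := card_union_le _ _
    _ < #R + #T := by omega
    _ = #(R ∪ T) := (card_union_of_disjoint hRT).symm
    _ ≤ monroeScore N A π' := card_le_card hnew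

theorem IsDroopValid.exists_monroeScore_lt_of_subset [DecidableEq V]
    (hv : IsDroopValid N C k d W π) (hd : d ∉ C) {c : K} (hcC : c ∈ C) (hcW : c ∉ W)
    {T : Finset V} (hTN : T ⊆ N) (hT : #T = #N / (k + 1)) {i₀ : V} (hi₀T : i₀ ∈ T)
    (hi₀W : π i₀ ∈ W) (hunhappy : ∀ i ∈ T, π i ∉ A i) (hc : ∀ i ∈ T, c ∈ A i) :
    ∃ W' π', IsDroopValid N C k d W' π' ∧ monroeScore N A π < monroeScore N A π' := by
  obtain ⟨hWC, -, hπ, hq⟩ := id hv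
  set w := π i₀
  set B := {i ∈ N | π i = w}
  have hB : #B = #N / (k + 1) := hq w (mem_insert_of_mem hi₀W)
  obtain ⟨σ, hσTB, hσ, hσfix⟩ := Perm.exists_mapsTo_of_card_eq (hT.trans hB.symm)
  have hσN : ∀ i ∈ N, σ i ∈ N := fun i hi =>
    if h : i ∈ T ∪ B then union_subset hTN (filter_subset _ _) (hσ i h)
    else (hσfix i h).symm ▸ hi
  have hcd : c ≠ d := ne_of_mem_of_not_mem hcC hd
  have hcπ : ∀ i ∈ N, π i ≠ c := fun i hi h =>
    (mem_insert.mp (h ▸ hπ i hi)).elim hcd hcW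
  have hwd : w ≠ d := ne_of_mem_of_not_mem (hWC hi₀W) hd
  -- `σ` moves the voters of `T` into the class of `w`, which `swap w c` then hands to `c`.
  refine ⟨W.map (swap w c).toEmbedding, fun i => swap w c (π (σ i)),
    hv.map_perm (swap_apply_of_ne_of_ne hwd.symm hcd.symm) (fun x hx => ?_) hσN,
    monroeScore_lt_of_reassign (B := B) hTN (fun i hi hiTB => ?_) (fun i hi => ?_) hunhappy ?_⟩
  · by_cases hxw : x = w
    · rw [hxw, swap_apply_left]
      exact hcC
    · rw [swap_apply_of_ne_of_ne hxw (ne_of_mem_of_not_mem hx hcW)]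
      exact hWC hx
  · have hiB : π i ≠ w := fun h => hiTB (mem_union_right _ (mem_filter.mpr ⟨hi, h⟩))
    rw [hσfix i hiTB, swap_apply_of_ne_of_ne hiB (hcπ i hi)]
  · rw [(mem_filter.mp (hσTB i hi)).2, swap_apply_left]
    exact hc i hi
  · have hi₀B : i₀ ∈ B := mem_filter.mpr ⟨hTN hi₀T, rfl⟩
    rw [hT, ← hB]
    exact card_lt_card ⟨sdiff_subset, fun h => (mem_sdiff.mp (h hi₀B)).2 hi₀T⟩

theorem IsDroopValid.exists_monroeScore_lt [DecidableEq V]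
    (hv : IsDroopValid N C k d W π) (hd : d ∉ C) {c : K} (hcC : c ∈ C) (hcW : c ∉ W)
    {S : Finset V} (hSN : S ⊆ N) (hS : #N / (k + 1) < #S) (hunhappy : ∀ i ∈ S, π i ∉ A i)
    (hc : ∀ i ∈ S, c ∈ A i) :
    ∃ W' π', IsDroopValid N C k d W' π' ∧ monroeScore N A π < monroeScore N A π' := by
  obtain ⟨-, -, hπ, hq⟩ := id hv
  obtain ⟨i₀, hi₀S, hi₀d⟩ : ∃ i ∈ S, π i ≠ d := by
    by_contra! h
    have := card_le_card fun i hi => mem_filter.mpr ⟨hSN hi, h i hi⟩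
    rw [hq d (mem_insert_self d W)] at this
    omega
  have hi₀W : π i₀ ∈ W := (mem_insert.mp (hπ i₀ (hSN hi₀S))).resolve_left hi₀d
  have hq_pos : 0 < #N / (k + 1) :=
    hq _ (mem_insert_of_mem hi₀W) ▸ card_pos.mpr ⟨i₀, mem_filter.mpr ⟨hSN hi₀S, rfl⟩⟩
  obtain ⟨T, hi₀T, hTS, hT⟩ :=
    exists_subsuperset_card_eq (singleton_subset_iff.mpr hi₀S) hq_pos hS.le
  exact hv.exists_monroeScore_lt_of_subset hd hcC hcW (hTS.trans hSN) hT
    (singleton_subset_iff.mp hi₀T) hi₀W (fun i hi => hunhappy i (hTS hi))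
    fun i hi => hc i (hTS hi)

end Monroe

theorem stmt_6_general {V K : Type*} [DecidableEq V] [DecidableEq K]
    (N : Finset V) (C : Finset K) (A : V → Finset K) (k : ℕ)
    (hA : ∀ i ∈ N, A i ⊆ C)
    (d : K) (hd : d ∉ C)
    (W : Finset K) (π : V → K)
    (hWC : W ⊆ C) (hWcard : W.card = k)
    (hπ : ∀ i ∈ N, π i ∈ insert d W)
    (hquota : ∀ c ∈ W, (N.filter (fun i => π i = c)).card = N.card / (k + 1))
    (hdummy : (N.filter (fun i => π i = d)).card = N.card / (k + 1))
    (hmax : ∀ (W' : Finset K) (π' : V → K), W' ⊆ C → W'.card = k →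
      (∀ i ∈ N, π' i ∈ insert d W') →
      (∀ c ∈ W', (N.filter (fun i => π' i = c)).card = N.card / (k + 1)) →
      (N.filter (fun i => π' i = d)).card = N.card / (k + 1) →
      (N.filter (fun i => π' i ∈ A i)).card ≤ (N.filter (fun i => π i ∈ A i)).card)
    (S : Finset V) (hSN : S ⊆ N)
    (hSsize : (S.card : ℚ) > (N.card : ℚ) / ((k : ℚ) + 1))
    (hunhappy : ∀ i ∈ S, π i ∉ A i) :
    ∀ c, (∀ i ∈ S, c ∈ A i) → c ∈ W := by
  intro c hc
  by_contra hcW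
  have hS : #N / (k + 1) < #S := by
    have := Nat.cast_div_le (α := ℚ) (m := #N) (n := k + 1)
    push_cast at this
    exact_mod_cast this.trans_lt hSsize
  obtain ⟨i, hi⟩ := card_pos.mp (Nat.zero_lt_of_lt hS)
  have hcC := hA i (hSN hi) (hc i hi)
  have hv : IsDroopValid N C k d W π :=
    ⟨hWC, hWcard, hπ, (forall_mem_insert _ _ _).mpr ⟨hdummy, hquota⟩⟩
  obtain ⟨W', π', ⟨hW'C, hW'k, hπ', hq'⟩, hlt⟩ :=
    hv.exists_monroeScore_lt hd hcC hcW hSN hS hunhappy hc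
  rw [forall_mem_insert] at hq'
  exact (hmax W' π' hW'C hW'k hπ' hq'.2 hq'.1).not_gt hlt

/-- Suppose `(k+1) ∣ n` and `(W, π)` is a Droop valid assignment
(`W ⊆ C`, `|W| = k`, `π : N → W ∪ {d}` with every preimage class—including that
of the dummy candidate `d ∉ C`—of size exactly `n/(k+1)`) whose Monroe score is
maximal among all Droop valid assignments.  If `S ⊆ N` satisfies
`|S| > n/(k+1)` and `π(i) ∉ A_i` for every `i ∈ S`, then `⋂_{i∈S} A_i ⊆ W`. -/
theorem stmt_6 {V K : Type*} [DecidableEq V] [DecidableEq K]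
    (N : Finset V) (C : Finset K) (A : V → Finset K) (k : ℕ)
    (hA : ∀ i ∈ N, A i ⊆ C) (hk : 1 ≤ k) (hdvd : (k + 1) ∣ N.card)
    (d : K) (hd : d ∉ C)
    (W : Finset K) (π : V → K)
    (hWC : W ⊆ C) (hWcard : W.card = k)
    (hπ : ∀ i ∈ N, π i ∈ insert d W)
    (hquota : ∀ c ∈ W, (N.filter (fun i => π i = c)).card = N.card / (k + 1))
    (hdummy : (N.filter (fun i => π i = d)).card = N.card / (k + 1))
    (hmax : ∀ (W' : Finset K) (π' : V → K), W' ⊆ C → W'.card = k →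
      (∀ i ∈ N, π' i ∈ insert d W') →
      (∀ c ∈ W', (N.filter (fun i => π' i = c)).card = N.card / (k + 1)) →
      (N.filter (fun i => π' i = d)).card = N.card / (k + 1) →
      (N.filter (fun i => π' i ∈ A i)).card ≤ (N.filter (fun i => π i ∈ A i)).card)
    (S : Finset V) (hSN : S ⊆ N)
    (hSsize : (S.card : ℚ) > (N.card : ℚ) / ((k : ℚ) + 1))
    (hunhappy : ∀ i ∈ S, π i ∉ A i) :
    ∀ c, (∀ i ∈ S, c ∈ A i) → c ∈ W :=
  stmt_6_general N C A k hA d hd W π hWC hWcard hπ hquota hdummy hmax S hSN hSsize hunhappy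
end

section
/- Let s, τ, t be positive integers with τ ≤ t, and let x₁ ≥ x₂ ≥ ... ≥ x_t be positive integers with x_i ≤ s for all i ∈ {1,...,t} and Σ_{i=1}^{t} x_i ≥ s·τ. Then Σ_{i=1}^{τ} 1/x_i ≤ t/s (as rationals). -/
/-- Let `s, τ, t` be positive integers with `τ ≤ t`, and let
`x₁ ≥ x₂ ≥ ... ≥ x_t` be positive integers with `x_i ≤ s` for all `i` and
`Σ_{i=1}^t x_i ≥ s·τ`. Then `Σ_{i=1}^τ 1/x_i ≤ t/s` (as rationals). -/
theorem stmt_8 (s τ t : ℕ) (hs : 1 ≤ s) (hτ : 1 ≤ τ) (hτt : τ ≤ t)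
    (x : ℕ → ℤ)
    (hmono : ∀ i j, 1 ≤ i → i ≤ j → j ≤ t → x j ≤ x i)
    (hpos : ∀ i, 1 ≤ i → i ≤ t → 1 ≤ x i)
    (hle : ∀ i, 1 ≤ i → i ≤ t → x i ≤ (s : ℤ))
    (hsum : (s : ℤ) * (τ : ℤ) ≤ ∑ i ∈ Finset.Icc 1 t, x i) :
    ∑ i ∈ Finset.Icc 1 τ, (1 : ℚ) / (x i : ℚ) ≤ (t : ℚ) / (s : ℚ) := by
  set m : ℤ := x τ with hm
  have hm1 : (1 : ℤ) ≤ m := hpos τ hτ hτt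
  have hms : m ≤ (s : ℤ) := hle τ hτ hτt
  have hMq : (1:ℚ) ≤ (m:ℚ) := by exact_mod_cast hm1
  have hSq : (1:ℚ) ≤ (s:ℚ) := by exact_mod_cast hs
  have hM0 : (0:ℚ) < (m:ℚ) := lt_of_lt_of_le one_pos hMq
  have hS0 : (0:ℚ) < (s:ℚ) := lt_of_lt_of_le one_pos hSq
  -- tail bound
  have htail : ∑ i ∈ Finset.Ioc τ t, x i ≤ ((t : ℤ) - (τ : ℤ)) * m := by
    calc ∑ i ∈ Finset.Ioc τ t, x i ≤ ∑ _i ∈ Finset.Ioc τ t, m := by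
          apply Finset.sum_le_sum
          intro j hj
          rw [Finset.mem_Ioc] at hj
          exact hmono τ j hτ hj.1.le hj.2
      _ = ((t : ℤ) - (τ : ℤ)) * m := by
          rw [Finset.sum_const, Nat.card_Ioc, nsmul_eq_mul]
          have : ((t - τ : ℕ) : ℤ) = (t : ℤ) - (τ : ℤ) := by
            omega
          rw [this]
  have hIcc1 : ∀ n : ℕ, Finset.Icc 1 n = Finset.Ioc 0 n := fun n => Finset.Icc_add_one_left_eq_Ioc 0 n
  have hsplit : ∑ i ∈ Finset.Icc 1 τ, x i + ∑ i ∈ Finset.Ioc τ t, x i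
      = ∑ i ∈ Finset.Icc 1 t, x i := by
    rw [hIcc1, hIcc1]
    exact Finset.sum_Ioc_consecutive _ (Nat.zero_le τ) hτt
  have hhead : (s:ℤ) * (τ:ℤ) - ((t : ℤ) - (τ : ℤ)) * m ≤ ∑ i ∈ Finset.Icc 1 τ, x i := by
    linarith
  -- pointwise secant bound
  have hpoint : ∀ i ∈ Finset.Icc 1 τ,
      (1:ℚ)/(x i : ℚ) ≤ 1/(m:ℚ) + 1/(s:ℚ) - (x i : ℚ)/((m:ℚ)*(s:ℚ)) := by
    intro i hi
    rw [Finset.mem_Icc] at hi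
    have h1 : (1:ℤ) ≤ x i := hpos i hi.1 (hi.2.trans hτt)
    have h2 : x i ≤ (s:ℤ) := hle i hi.1 (hi.2.trans hτt)
    have h3 : m ≤ x i := hmono i τ hi.1 hi.2 hτt
    have hAq : (1:ℚ) ≤ (x i : ℚ) := by exact_mod_cast h1
    have h3q : (m:ℚ) ≤ (x i : ℚ) := by exact_mod_cast h3
    have h2q : (x i : ℚ) ≤ (s:ℚ) := by exact_mod_cast h2
    have hA0 : (0:ℚ) < (x i : ℚ) := lt_of_lt_of_le one_pos hAq
    have heq : 1/(m:ℚ) + 1/(s:ℚ) - (x i:ℚ)/((m:ℚ)*(s:ℚ)) - 1/(x i:ℚ)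
        = (((x i:ℚ) - (m:ℚ)) * ((s:ℚ) - (x i:ℚ))) / ((x i:ℚ) * (m:ℚ) * (s:ℚ)) := by
      field_simp
      ring
    have hnn : 0 ≤ (((x i:ℚ) - (m:ℚ)) * ((s:ℚ) - (x i:ℚ))) / ((x i:ℚ) * (m:ℚ) * (s:ℚ)) := by
      apply div_nonneg
      · exact mul_nonneg (by linarith) (by linarith)
      · positivity
    rw [← heq] at hnn
    linarith
  have hcard : (Finset.Icc 1 τ).card = τ := by rw [Nat.card_Icc]; omega
  have hsum2 : ∑ i ∈ Finset.Icc 1 τ, (1:ℚ)/(x i : ℚ) ≤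
      ∑ i ∈ Finset.Icc 1 τ, (1/(m:ℚ) + 1/(s:ℚ) - (x i : ℚ)/((m:ℚ)*(s:ℚ))) :=
    Finset.sum_le_sum hpoint
  have hRHS : ∑ i ∈ Finset.Icc 1 τ, (1/(m:ℚ) + 1/(s:ℚ) - (x i : ℚ)/((m:ℚ)*(s:ℚ)))
      = (τ:ℚ)*(1/(m:ℚ) + 1/(s:ℚ))
        - ((∑ i ∈ Finset.Icc 1 τ, x i : ℤ) : ℚ)/((m:ℚ)*(s:ℚ)) := by
    rw [Finset.sum_sub_distrib, Finset.sum_const, hcard, ← Finset.sum_div]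
    push_cast
    ring
  have hheadq : (s:ℚ) * (τ:ℚ) - ((t:ℚ) - (τ:ℚ)) * (m:ℚ)
      ≤ ((∑ i ∈ Finset.Icc 1 τ, x i : ℤ) : ℚ) := by exact_mod_cast hhead
  calc ∑ i ∈ Finset.Icc 1 τ, (1:ℚ)/(x i : ℚ)
      ≤ (τ:ℚ)*(1/(m:ℚ) + 1/(s:ℚ))
        - ((∑ i ∈ Finset.Icc 1 τ, x i : ℤ) : ℚ)/((m:ℚ)*(s:ℚ)) := by
        rw [← hRHS]; exact hsum2
    _ ≤ (τ:ℚ)*(1/(m:ℚ) + 1/(s:ℚ))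
        - ((s:ℚ) * (τ:ℚ) - ((t:ℚ) - (τ:ℚ)) * (m:ℚ))/((m:ℚ)*(s:ℚ)) := by
        gcongr
    _ = (t:ℚ)/(s:ℚ) := by
        field_simp
        ring
end

section
/- Let (C, N, (A_i)_{i∈N}, k) be an approval election with n = |N|, k ≥ 1, and |C| ≥ k. Then there exists a committee W ⊆ C with |W| = k that provides Droop-FJR. -/
/-- Budget bound: the invariant implies the partial committee has at most `k` members. -/
lemma aux_budget {k n n' w : ℕ} (hk : 1 ≤ k)
    (h : w = 0 ∨ w * n < (k + 1) * (n - n')) : w ≤ k := by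
  rcases h with h | h
  · omega
  · rcases Nat.eq_zero_or_pos n with h0 | h0
    · rw [h0] at h; simp at h
    · have hle : n - n' ≤ n := Nat.sub_le _ _
      have h2 : w * n < (k + 1) * n := lt_of_lt_of_le h (Nat.mul_le_mul_left _ hle)
      have h3 := Nat.lt_of_mul_lt_mul_right h2
      omega

open Classical in
/-- Greedy cohesive construction, by strong induction on the number of remaining voters. -/
lemma aux_greedy {V K : Type*} [DecidableEq V] [DecidableEq K]
    (N : Finset V) (C : Finset K) (A : V → Finset K) (k : ℕ)
    (hk : 1 ≤ k) (hC : k ≤ C.card) :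
    ∀ m : ℕ, ∀ N' : Finset V, N' ⊆ N → N'.card ≤ m → ∀ W₀ : Finset K, W₀ ⊆ C →
    (W₀.card = 0 ∨ W₀.card * N.card < (k+1) * (N.card - N'.card)) →
    ∃ W, W ⊆ C ∧ W.card = k ∧ W₀ ⊆ W ∧
      (∀ ℓ : ℕ, 1 ≤ ℓ → ℓ ≤ k → ∀ T ⊆ C, ∀ S ⊆ N',
        (∀ i ∈ S, ℓ ≤ (A i ∩ T).card) →
        T.card * N.card < S.card * (k+1) →
        ∃ i ∈ S, ℓ ≤ (A i ∩ W).card) := by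
  intro m
  induction m with
  | zero =>
    intro N' hN'N hcard W₀ hW₀C hbud
    obtain ⟨W, hW₀W, hWC, hWcard⟩ :=
      Finset.exists_subsuperset_card_eq hW₀C (aux_budget hk hbud) hC
    refine ⟨W, hWC, hWcard, hW₀W, ?_⟩
    intro ℓ hℓ1 hℓk T hTC S hSN' hcoh hsize
    have hS0 : S.card = 0 := by
      have h1 : N'.card = 0 := Nat.le_zero.mp hcard
      have h2 := Finset.card_le_card hSN'
      omega
    rw [hS0] at hsize
    simp at hsize
  | succ m ih =>
    intro N' hN'N hcard W₀ hW₀C hbud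
    by_cases hex : ∃ ℓ : ℕ, 1 ≤ ℓ ∧ ℓ ≤ k ∧ ∃ T, T ⊆ C ∧ ∃ S, S ⊆ N' ∧
        (∀ i ∈ S, ℓ ≤ (A i ∩ T).card) ∧ T.card * N.card < S.card * (k+1)
    · -- pick the maximal cohesiveness level ℓ
      set P : ℕ → Prop := fun ℓ => 1 ≤ ℓ ∧ ∃ T, T ⊆ C ∧ ∃ S, S ⊆ N' ∧
        (∀ i ∈ S, ℓ ≤ (A i ∩ T).card) ∧ T.card * N.card < S.card * (k+1) with hP
      obtain ⟨ℓ₀, hℓ₀1, hℓ₀k, hℓ₀P⟩ := hex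
      have hPℓ₀ : P ℓ₀ := ⟨hℓ₀1, hℓ₀P⟩
      set L := Nat.findGreatest P k with hL
      have hLk : L ≤ k := Nat.findGreatest_le k
      have hℓ₀L : ℓ₀ ≤ L := Nat.le_findGreatest hℓ₀k hPℓ₀
      have hPL : P L := Nat.findGreatest_spec hℓ₀k hPℓ₀
      obtain ⟨hL1, T', hT'C, S', hS'N', hcoh', hsize'⟩ := hPL
      have hS'pos : 0 < S'.card := by
        rcases Nat.eq_zero_or_pos S'.card with h0 | h0
        · rw [h0] at hsize'; simp at hsize'
        · exact h0
      -- recurse on the remaining voters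
      have hsub : N' \ S' ⊆ N := (Finset.sdiff_subset).trans hN'N
      have hNsd : (N' \ S').card = N'.card - S'.card := Finset.card_sdiff_of_subset hS'N'
      have hSc := Finset.card_le_card hS'N'
      have hcard' : (N' \ S').card ≤ m := by omega
      have hW₀' : W₀ ∪ T' ⊆ C := Finset.union_subset hW₀C hT'C
      have hNN' : N'.card ≤ N.card := Finset.card_le_card hN'N
      have hbud' : (W₀ ∪ T').card = 0 ∨
          (W₀ ∪ T').card * N.card < (k+1) * (N.card - (N' \ S').card) := by
        right
        have hU : (W₀ ∪ T').card ≤ W₀.card + T'.card := Finset.card_union_le _ _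
        have hrem : N.card - (N' \ S').card = (N.card - N'.card) + S'.card := by omega
        have key : W₀.card * N.card + T'.card * N.card < (k+1) * (N.card - (N' \ S').card) := by
          rcases hbud with h | h
          · rw [h]
            simp only [Nat.zero_mul, Nat.zero_add]
            calc T'.card * N.card < S'.card * (k+1) := hsize'
              _ ≤ ((N.card - N'.card) + S'.card) * (k+1) := by
                  apply Nat.mul_le_mul_right; omega
              _ = (k+1) * (N.card - (N' \ S').card) := by rw [hrem, Nat.mul_comm]
          · calc W₀.card * N.card + T'.card * N.card
                < (k+1) * (N.card - N'.card) + S'.card * (k+1) :=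
                  Nat.add_lt_add_of_lt_of_le h (Nat.le_of_lt hsize')
              _ = (k+1) * ((N.card - N'.card) + S'.card) := by ring
              _ = (k+1) * (N.card - (N' \ S').card) := by rw [hrem]
        calc (W₀ ∪ T').card * N.card ≤ (W₀.card + T'.card) * N.card :=
              Nat.mul_le_mul_right _ hU
          _ = W₀.card * N.card + T'.card * N.card := by ring
          _ < _ := key
      obtain ⟨W, hWC, hWcard, hW₀W, hprop⟩ := ih (N' \ S') hsub hcard' (W₀ ∪ T') hW₀' hbud'
      have hT'W : T' ⊆ W := (Finset.subset_union_right).trans hW₀W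
      refine ⟨W, hWC, hWcard, (Finset.subset_union_left).trans hW₀W, ?_⟩
      intro ℓ hℓ1 hℓk T hTC S hSN' hcoh hsize
      have hℓL : ℓ ≤ L := Nat.le_findGreatest hℓk ⟨hℓ1, T, hTC, S, hSN', hcoh, hsize⟩
      by_cases hint : (S ∩ S').Nonempty
      · obtain ⟨i, hi⟩ := hint
        rw [Finset.mem_inter] at hi
        refine ⟨i, hi.1, ?_⟩
        have h1 : L ≤ (A i ∩ T').card := hcoh' i hi.2
        have h2 : (A i ∩ T').card ≤ (A i ∩ W).card :=
          Finset.card_le_card (Finset.inter_subset_inter (Finset.Subset.refl _) hT'W)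
        omega
      · have hSsub : S ⊆ N' \ S' := by
          intro x hx
          rw [Finset.mem_sdiff]
          exact ⟨hSN' hx, fun hxS' => hint ⟨x, Finset.mem_inter.mpr ⟨hx, hxS'⟩⟩⟩
        exact hprop ℓ hℓ1 hℓk T hTC S hSsub hcoh hsize
    · -- no cohesive group remains: fill up arbitrarily
      obtain ⟨W, hW₀W, hWC, hWcard⟩ :=
        Finset.exists_subsuperset_card_eq hW₀C (aux_budget hk hbud) hC
      refine ⟨W, hWC, hWcard, hW₀W, ?_⟩
      intro ℓ hℓ1 hℓk T hTC S hSN' hcoh hsize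
      exact absurd ⟨ℓ, hℓ1, hℓk, T, hTC, S, hSN', hcoh, hsize⟩ hex

/-- In every approval election with `k ≥ 1` and `|C| ≥ k`,
there exists a committee `W ⊆ C` with `|W| = k` providing Droop-FJR. -/
theorem stmt_11 {V K : Type*} [DecidableEq V] [DecidableEq K]
    (N : Finset V) (C : Finset K) (A : V → Finset K) (k : ℕ)
    (hA : ∀ i ∈ N, A i ⊆ C) (hk : 1 ≤ k) (hC : k ≤ C.card) :
    ∃ W ⊆ C, W.card = k ∧ DroopFJR N C A k W := by
  obtain ⟨W, hWC, hWcard, -, hprop⟩ :=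
    aux_greedy N C A k hk hC N.card N (le_refl _) (le_refl _) ∅ (Finset.empty_subset _)
      (Or.inl (by simp))
  refine ⟨W, hWC, hWcard, ?_⟩
  intro ℓ hℓ1 hℓk T hTC S hSN hcoh hsize
  apply hprop ℓ hℓ1 hℓk T hTC S hSN hcoh
  have hkpos : (0 : ℚ) < (k : ℚ) + 1 := by positivity
  rw [gt_iff_lt, div_lt_iff₀ hkpos] at hsize
  exact_mod_cast hsize
end

section
/- Let (C, N, (A_i)_{i∈N}, k) be an approval election with n = |N|, k ≥ 1, and |C| ≥ k. Then there exists a committee W ⊆ C with |W| = k that provides Droop-EJR+. -/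
namespace DroopAux

variable {V K : Type*} [DecidableEq V] [DecidableEq K]

/-- A violation of Droop-EJR+ at level `ℓ`. -/
def Viol (N : Finset V) (C : Finset K) (A : V → Finset K) (k ℓ : ℕ) (W : Finset K) : Prop :=
  ∃ S ⊆ N, (S.card : ℚ) > (ℓ : ℚ) * (N.card : ℚ) / ((k : ℚ) + 1) ∧
      ∃ c ∈ C, c ∉ W ∧ (∀ i ∈ S, c ∈ A i) ∧ ∀ i ∈ S, (A i ∩ W).card ≤ ℓ - 1

lemma viol_mono {N : Finset V} {C : Finset K} {A : V → Finset K} {k ℓ : ℕ}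
    {W W' : Finset K} (hWW : W ⊆ W') (h : Viol N C A k ℓ W') : Viol N C A k ℓ W := by
  obtain ⟨S, hSN, hScard, c, hcC, hcW, hap, hsat⟩ := h
  refine ⟨S, hSN, hScard, c, hcC, fun hc => hcW (hWW hc), hap, fun i hi => ?_⟩
  exact le_trans (Finset.card_le_card (Finset.inter_subset_inter (Finset.Subset.refl _) hWW))
    (hsat i hi)

set_option maxHeartbeats 1000000 in
/-- The greedy growth lemma.  From any partial committee `W` satisfying the
load invariants, one can reach a committee of size at most `k` with no
violations. -/
lemma grow (N : Finset V) (C : Finset K) (A : V → Finset K) (k : ℕ) (hk : 1 ≤ k) :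
    ∀ d : ℕ, ∀ (W : Finset K) (load : V → ℚ) (L : ℕ),
    (C \ W).card ≤ d → W ⊆ C → W.card ≤ k → 1 ≤ L → L ≤ k →
    (∀ i ∈ N, 0 ≤ load i) →
    (∀ i ∈ N, (L : ℚ) * load i ≤ min (((A i ∩ W).card : ℚ)) (L : ℚ)) →
    ((W.card : ℚ) * (N.card : ℚ) / ((k : ℚ) + 1) ≤ ∑ i ∈ N, load i) →
    (∀ ℓ : ℕ, 1 ≤ ℓ → ℓ ≤ k → Viol N C A k ℓ W → ℓ ≤ L) →
    ∃ W', W ⊆ W' ∧ W' ⊆ C ∧ W'.card ≤ k ∧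
      ∀ ℓ : ℕ, 1 ≤ ℓ → ℓ ≤ k → ¬ Viol N C A k ℓ W' := by
  intro d
  induction d with
  | zero =>
    intro W load L hd hWC hWk _ _ _ _ _ _
    by_cases hv : ∃ ℓ : ℕ, 1 ≤ ℓ ∧ ℓ ≤ k ∧ Viol N C A k ℓ W
    · obtain ⟨ℓ, _, _, S, hSN, _, c, hcC, hcW, _, _⟩ := hv
      have : c ∈ C \ W := Finset.mem_sdiff.mpr ⟨hcC, hcW⟩
      have h0 : C \ W = ∅ := Finset.card_eq_zero.mp (Nat.le_zero.mp hd)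
      rw [h0] at this
      exact absurd this (Finset.notMem_empty c)
    · push_neg at hv
      exact ⟨W, Finset.Subset.refl _, hWC, hWk, fun ℓ h1 h2 => hv ℓ h1 h2⟩
  | succ d ih =>
    intro W load L hd hWC hWk hL1 hLk hload0 hI1 hI2 hI0
    by_cases hv : ∃ ℓ : ℕ, 1 ≤ ℓ ∧ ℓ ≤ k ∧ Viol N C A k ℓ W
    · classical
      obtain ⟨ℓ₀, hℓ₀1, hℓ₀k, hviol₀⟩ := hv
      set P : ℕ → Prop := fun ℓ => 1 ≤ ℓ ∧ Viol N C A k ℓ W with hPdef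
      haveI : DecidablePred P := Classical.decPred P
      set ℓs : ℕ := Nat.findGreatest P k with hℓsdef
      have hPs : P ℓs := Nat.findGreatest_spec hℓ₀k ⟨hℓ₀1, hviol₀⟩
      have hℓs1 : 1 ≤ ℓs := hPs.1
      have hℓsk : ℓs ≤ k := Nat.findGreatest_le k
      have hmaxs : ∀ ℓ : ℕ, 1 ≤ ℓ → ℓ ≤ k → Viol N C A k ℓ W → ℓ ≤ ℓs :=
        fun ℓ h1 h2 hvi => Nat.le_findGreatest h2 ⟨h1, hvi⟩
      have hℓsL : ℓs ≤ L := hI0 ℓs hℓs1 hℓsk hPs.2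
      obtain ⟨S, hSN, hScard, c, hcC, hcW, hap, hsat⟩ := hPs.2
      -- basic positivity facts
      have hℓsQ : (1 : ℚ) ≤ (ℓs : ℚ) := by exact_mod_cast hℓs1
      have hℓspos : (0 : ℚ) < (ℓs : ℚ) := lt_of_lt_of_le one_pos hℓsQ
      have hℓsne : (ℓs : ℚ) ≠ 0 := ne_of_gt hℓspos
      have hinvpos : (0 : ℚ) < ((ℓs : ℚ))⁻¹ := inv_pos.mpr hℓspos
      have hLQ : (1 : ℚ) ≤ (L : ℚ) := by exact_mod_cast hL1
      have hLpos : (0 : ℚ) < (L : ℚ) := lt_of_lt_of_le one_pos hLQ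
      have hkpos : (0 : ℚ) < (k : ℚ) + 1 := by positivity
      have hℓsLQ : (ℓs : ℚ) ≤ (L : ℚ) := by exact_mod_cast hℓsL
      -- N is nonempty
      have hSpos : 0 < S.card := by
        by_contra h
        have h0 : S.card = 0 := by omega
        rw [h0] at hScard
        have : (0 : ℚ) ≤ (ℓs : ℚ) * (N.card : ℚ) / ((k : ℚ) + 1) := by positivity
        simp only [Nat.cast_zero, gt_iff_lt] at hScard
        linarith
      have hnpos : (0 : ℚ) < (N.card : ℚ) := by
        obtain ⟨i, hiS⟩ := Finset.card_pos.mp hSpos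
        have : 0 < N.card := Finset.card_pos.mpr ⟨i, hSN hiS⟩
        exact_mod_cast this
      -- the new committee and loads
      set W' : Finset K := insert c W with hW'def
      set load' : V → ℚ := fun i => load i + (if i ∈ S then ((ℓs : ℚ))⁻¹ else 0)
        with hload'def
      have hWsub' : W ⊆ W' := Finset.subset_insert c W
      have hW'C : W' ⊆ C := Finset.insert_subset hcC hWC
      have hcardW' : W'.card = W.card + 1 := Finset.card_insert_of_notMem hcW
      -- cardinality of the remaining pool decreases
      have hsd : (C \ W').card ≤ d := by
        have hsub : C \ W' ⊆ C \ W :=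
          Finset.sdiff_subset_sdiff (Finset.Subset.refl _) hWsub'
        have hss : C \ W' ⊂ C \ W := by
          refine (Finset.ssubset_iff_of_subset hsub).mpr ⟨c, Finset.mem_sdiff.mpr ⟨hcC, hcW⟩, ?_⟩
          intro hmem
          exact (Finset.mem_sdiff.mp hmem).2 (Finset.mem_insert_self c W)
        have := Finset.card_lt_card hss
        omega
      -- new nonnegativity
      have hload0' : ∀ i ∈ N, 0 ≤ load' i := by
        intro i hiN
        have := hload0 i hiN
        by_cases hiS : i ∈ S <;> simp [hload'def, hiS] <;> positivity
      -- the key invariant I1 for the new state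
      have hI1' : ∀ i ∈ N, (ℓs : ℚ) * load' i ≤ min (((A i ∩ W').card : ℚ)) (ℓs : ℚ) := by
        intro i hiN
        have hmono : ((A i ∩ W).card : ℚ) ≤ ((A i ∩ W').card : ℚ) := by
          exact_mod_cast Finset.card_le_card
            (Finset.inter_subset_inter (Finset.Subset.refl _) hWsub')
        have hLload := hI1 i hiN
        have h0 := hload0 i hiN
        have hstep : (ℓs : ℚ) * load i ≤ (L : ℚ) * load i :=
          mul_le_mul_of_nonneg_right hℓsLQ h0
        have hsA : (ℓs : ℚ) * load i ≤ ((A i ∩ W).card : ℚ) :=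
          le_trans hstep (le_trans hLload (min_le_left _ _))
        have hload1 : load i ≤ 1 := by
          have hLL : (L : ℚ) * load i ≤ (L : ℚ) := le_trans hLload (min_le_right _ _)
          nlinarith
        have hsB : (ℓs : ℚ) * load i ≤ (ℓs : ℚ) := by nlinarith
        by_cases hiS : i ∈ S
        · -- satisfaction increases by one and was at most ℓs - 1
          have hsatn : (A i ∩ W).card + 1 ≤ ℓs := by
            have := hsat i hiS
            omega
          have hsatQ : ((A i ∩ W).card : ℚ) + 1 ≤ (ℓs : ℚ) := by exact_mod_cast hsatn
          have hnewcard : (A i ∩ W').card = (A i ∩ W).card + 1 := by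
            rw [hW'def, Finset.inter_insert_of_mem (hap i hiS),
              Finset.card_insert_of_notMem]
            intro hmem
            exact hcW (Finset.mem_inter.mp hmem).2
          have hnewQ : ((A i ∩ W').card : ℚ) = ((A i ∩ W).card : ℚ) + 1 := by
            rw [hnewcard]; push_cast; ring
          have hldQ : (ℓs : ℚ) * load' i = (ℓs : ℚ) * load i + 1 := by
            simp only [hload'def, if_pos hiS]
            field_simp
          rw [hldQ, hnewQ]
          refine le_min ?_ ?_
          · linarith
          · linarith
        · have hldQ : load' i = load i := by simp [hload'def, hiS]
          rw [hldQ]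
          exact le_min (le_trans hsA hmono) hsB
      -- sum of new loads
      have hsum_eq : ∑ i ∈ N, load' i
          = (∑ i ∈ N, load i) + (S.card : ℚ) * ((ℓs : ℚ))⁻¹ := by
        simp only [hload'def]
        rw [Finset.sum_add_distrib, Finset.sum_ite_mem,
          Finset.inter_eq_right.mpr hSN, Finset.sum_const, nsmul_eq_mul]
      have hgain : (N.card : ℚ) / ((k : ℚ) + 1) < (S.card : ℚ) * ((ℓs : ℚ))⁻¹ := by
        have h := mul_lt_mul_of_pos_right hScard hinvpos
        have heq : (ℓs : ℚ) * (N.card : ℚ) / ((k : ℚ) + 1) * ((ℓs : ℚ))⁻¹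
            = (N.card : ℚ) / ((k : ℚ) + 1) := by
          field_simp
        rw [heq] at h
        exact h
      have hsum' : ((W'.card : ℚ)) * (N.card : ℚ) / ((k : ℚ) + 1) < ∑ i ∈ N, load' i := by
        rw [hsum_eq, hcardW']
        push_cast
        have : ((W.card : ℚ) + 1) * (N.card : ℚ) / ((k : ℚ) + 1)
            = (W.card : ℚ) * (N.card : ℚ) / ((k : ℚ) + 1)
              + (N.card : ℚ) / ((k : ℚ) + 1) := by ring
        rw [this]
        linarith
      -- each new load is at most one, so the sum is at most n
      have hsum_ub : ∑ i ∈ N, load' i ≤ (N.card : ℚ) := by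
        have h1 : ∀ i ∈ N, load' i ≤ 1 := by
          intro i hiN
          have := le_trans (hI1' i hiN) (min_le_right _ _)
          nlinarith
        calc ∑ i ∈ N, load' i ≤ ∑ _i ∈ N, (1 : ℚ) := Finset.sum_le_sum h1
          _ = (N.card : ℚ) := by rw [Finset.sum_const, nsmul_eq_mul, mul_one]
      -- hence the new committee has at most k members
      have hW'k : W'.card ≤ k := by
        have hlt : ((W'.card : ℚ)) * (N.card : ℚ) / ((k : ℚ) + 1) < (N.card : ℚ) :=
          lt_of_lt_of_le hsum' hsum_ub
        rw [div_lt_iff₀ hkpos] at hlt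
        have : ((W'.card : ℚ)) < (k : ℚ) + 1 := by nlinarith
        have : (W'.card : ℚ) < ((k + 1 : ℕ) : ℚ) := by push_cast; linarith
        have := Nat.cast_lt.mp this
        omega
      -- maximality is preserved
      have hI0' : ∀ ℓ : ℕ, 1 ≤ ℓ → ℓ ≤ k → Viol N C A k ℓ W' → ℓ ≤ ℓs :=
        fun ℓ h1 h2 hvi => hmaxs ℓ h1 h2 (viol_mono hWsub' hvi)
      obtain ⟨W'', hsub'', hC'', hk'', hnov''⟩ :=
        ih W' load' ℓs hsd hW'C hW'k hℓs1 hℓsk hload0' hI1' (le_of_lt hsum') hI0'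
      exact ⟨W'', Finset.Subset.trans hWsub' hsub'', hC'', hk'', hnov''⟩
    · push_neg at hv
      exact ⟨W, Finset.Subset.refl _, hWC, hWk, fun ℓ h1 h2 => hv ℓ h1 h2⟩

end DroopAux

/-- In every approval election with `k ≥ 1` and `|C| ≥ k`,
there exists a committee `W ⊆ C` with `|W| = k` providing Droop-EJR+. -/
theorem stmt_12 {V K : Type*} [DecidableEq V] [DecidableEq K]
    (N : Finset V) (C : Finset K) (A : V → Finset K) (k : ℕ)
    (hA : ∀ i ∈ N, A i ⊆ C) (hk : 1 ≤ k) (hC : k ≤ C.card) :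
    ∃ W ⊆ C, W.card = k ∧ DroopEJRplus N C A k W := by
  obtain ⟨W₁, _, hW₁C, hW₁k, hnov⟩ :=
    DroopAux.grow N C A k hk C.card ∅ (fun _ => 0) k (by simp) (Finset.empty_subset C)
      (by simp) hk le_rfl (fun i _ => le_rfl)
      (by
        intro i _
        simp only [mul_zero]
        refine le_min ?_ ?_ <;> positivity)
      (by simp)
      (fun ℓ _ h2 _ => h2)
  obtain ⟨W, hW₁W, hWC, hWcard⟩ := Finset.exists_subsuperset_card_eq hW₁C hW₁k hC
  refine ⟨W, hWC, hWcard, ?_⟩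
  rintro ⟨ℓ, h1, h2, S, hSN, hScard, c, hcC, hcW, hap, hsat⟩
  exact hnov ℓ h1 h2
    (DroopAux.viol_mono hW₁W ⟨S, hSN, hScard, c, hcC, hcW, hap, hsat⟩)
end

section
/- Let (C, N, (A_i)_{i∈N}, k) be an approval election with n = |N|, k ≥ 1, and k dividing n. Let (W, π) be a Hare valid assignment whose Monroe score is maximal among all Hare valid assignments for this election. Then W provides Droop-JR. -/
/-- An outcome `W` provides Droop-JR if for every `S ⊆ N` with `|S| > n/(k+1)`
and `⋂_{i∈S} A_i ≠ ∅`, it holds that `(⋃_{i∈S} A_i) ∩ W ≠ ∅`. -/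
def DroopJR {V K : Type*}
    (N : Finset V) (A : V → Finset K) (k : ℕ) (W : Finset K) : Prop :=
  ∀ S ⊆ N, (S.card : ℚ) > (N.card : ℚ) / ((k : ℚ) + 1) →
    (∃ c, ∀ i ∈ S, c ∈ A i) →
    ∃ c ∈ W, ∃ i ∈ S, c ∈ A i

/-!
If some group `S` of more than `n/(k+1)` voters commonly approves a candidate `c'` while no
voter of `S` approves any member of `W`, then the satisfied voters number at most
`n - |S| < k · s` with `s = min(|S|, n/k)`, so by pigeonhole some `c ∈ W` satisfies fewer than
`s` voters of its own class. Replacing `c` by `c'` and permuting voters so that `s` members of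
`S` land in the class of `c` (exchanging them with members of that class outside `S`) loses
only the voters `c` satisfied and gains those `s` voters, contradicting maximality.
-/

open Finset Equiv

namespace Finset

variable {α : Type*}

theorem card_filter_comp_perm {N : Finset α} {σ : Perm α} (hσ : ∀ i, σ i ∈ N ↔ i ∈ N)
    (p : α → Prop) [DecidablePred p] : #{i ∈ N | p (σ i)} = #{i ∈ N | p i} :=
  card_nbij' σ σ.symm (fun i hi => by simp_all) (fun i hi => by simp_all [← hσ (σ.symm i)])
    (fun i _ => σ.symm_apply_apply i) (fun i _ => σ.apply_symm_apply i)

variable [DecidableEq α]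

theorem exists_perm_swap_of_disjoint {L M : Finset α} (hLM : Disjoint L M) (hcard : #L = #M) :
    ∃ σ : Perm α, (∀ i ∈ L, σ i ∈ M) ∧ (∀ i ∈ M, σ i ∈ L) ∧
      ∀ i, i ∉ L → i ∉ M → σ i = i := by
  induction L using Finset.induction_on generalizing M with
  | empty =>
    rw [card_empty, eq_comm, card_eq_zero] at hcard
    exact ⟨1, by simp, by simp [hcard], fun _ _ _ => rfl⟩
  | @insert a L ha ih =>
    obtain ⟨b, hb⟩ : M.Nonempty := by
      rw [← card_pos, ← hcard]; exact card_pos.mpr (insert_nonempty a L)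
    rw [disjoint_insert_left] at hLM
    have haM : a ∉ M := hLM.1
    have hbL : b ∉ L := disjoint_right.mp hLM.2 hb
    obtain ⟨σ, hσL, hσM, hσ⟩ := ih (disjoint_of_subset_right (erase_subset b M) hLM.2)
      (by rw [card_erase_of_mem hb, ← hcard, card_insert_of_notMem ha]; rfl)
    have hσa : σ a = a := hσ a ha (fun h => haM (mem_of_mem_erase h))
    have hσb : σ b = b := hσ b hbL (notMem_erase b M)
    refine ⟨swap a b * σ, ?_, ?_, ?_⟩
    · intro i hi
      rcases mem_insert.mp hi with rfl | hi
      · simpa [hσa] using hb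
      · have := hσL i hi
        rw [Perm.mul_apply, swap_apply_of_ne_of_ne
          (by rintro rfl; exact haM (mem_of_mem_erase this)) (ne_of_mem_erase this)]
        exact mem_of_mem_erase this
    · intro i hi
      by_cases hib : i = b
      · simp [hib, hσb]
      · have := hσM i (mem_erase.mpr ⟨hib, hi⟩)
        rw [Perm.mul_apply, swap_apply_of_ne_of_ne (by rintro rfl; exact ha this)
          (by rintro rfl; exact hbL this)]
        exact mem_insert_of_mem this
    · intro i hiL hiM
      rw [mem_insert, not_or] at hiL
      have : σ i = i := hσ i hiL.2 (fun h => hiM (mem_of_mem_erase h))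
      rw [Perm.mul_apply, this, swap_apply_of_ne_of_ne hiL.1 (by rintro rfl; exact hiM hb)]

theorem exists_perm_mapsTo_of_card_le {N X Y : Finset α} (hX : X ⊆ N) (hY : Y ⊆ N)
    (hXY : #X ≤ #Y) :
    ∃ σ : Perm α, (∀ i, σ i ∈ N ↔ i ∈ N) ∧ (∀ i ∈ X, σ i ∈ Y) ∧
      ∀ i, i ∉ X → i ∉ Y → σ i = i := by
  obtain ⟨L, hL, hLcard⟩ := exists_subset_card_eq (card_sdiff_le_card_sdiff_iff.mpr hXY)
  have hLY : L ⊆ Y := hL.trans sdiff_subset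
  have hLX : Disjoint L X := disjoint_of_subset_left hL sdiff_disjoint
  obtain ⟨σ, hσL, hσM, hσ⟩ := exists_perm_swap_of_disjoint
    (disjoint_of_subset_left hLY disjoint_sdiff) hLcard
  have hMN : X \ Y ⊆ N := sdiff_subset.trans hX
  refine ⟨σ, fun i => ?_, fun i hi => ?_, fun i hiX hiY => ?_⟩
  · by_cases hiL : i ∈ L
    · exact iff_of_true (hMN (hσL i hiL)) (hY (hLY hiL))
    by_cases hiM : i ∈ X \ Y
    · exact iff_of_true (hY (hLY (hσM i hiM))) (hMN hiM)
    rw [hσ i hiL hiM]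
  · by_cases hiY : i ∈ Y
    · rwa [hσ i (disjoint_right.mp hLX hi) (fun h => (mem_sdiff.mp h).2 hiY)]
    · exact hLY (hσM i (mem_sdiff.mpr ⟨hi, hiY⟩))
  · exact hσ i (fun h => hiY (hLY h)) (fun h => hiX (mem_sdiff.mp h).1)

end Finset

theorem Nat.lt_mul_min_of_lt_div_succ {n s t k : ℕ} (hk : k ∣ n)
    (hs : (n : ℚ) / (k + 1) < s) (ht : s + t ≤ n) : t < k * min s (n / k) := by
  have hn : n < (k + 1) * s := by
    rw [div_lt_iff₀ (by positivity)] at hs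
    exact_mod_cast hs.trans_eq (mul_comm _ _)
  rcases le_total s (n / k) with h | h
  · rw [min_eq_left h]; linarith
  · rw [min_eq_right h, Nat.mul_div_cancel' hk]
    have : 0 < s := Nat.pos_of_ne_zero (by rintro rfl; simp at hn)
    omega

section Election

variable {V K : Type*} [DecidableEq K]

structure IsHareValid (N : Finset V) (C : Finset K) (k : ℕ) (W : Finset K) (π : V → K) :
    Prop where
  subset : W ⊆ C
  card_eq : #W = k
  mapsTo : ∀ i ∈ N, π i ∈ W
  card_fiber : ∀ c ∈ W, #{i ∈ N | π i = c} = #N / k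

def satisfiedVoters (N : Finset V) (A : V → Finset K) (π : V → K) : Finset V :=
  {i ∈ N | π i ∈ A i}

variable {N : Finset V} {C : Finset K} {k : ℕ} {W : Finset K} {π : V → K}

theorem IsHareValid.comp_perm (h : IsHareValid N C k W π) {σ : Perm V}
    (hσ : ∀ i, σ i ∈ N ↔ i ∈ N) : IsHareValid N C k W (π ∘ σ) :=
  ⟨h.subset, h.card_eq, fun i hi => h.mapsTo _ ((hσ i).mpr hi),
    fun c hc => (card_filter_comp_perm hσ (π · = c)).trans (h.card_fiber c hc)⟩

theorem IsHareValid.replace (h : IsHareValid N C k W π) {c c' : K} (hc : c ∈ W)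
    (hc'C : c' ∈ C) (hc'W : c' ∉ W) :
    IsHareValid N C k (insert c' (W.erase c)) (fun i => if π i = c then c' else π i) := by
  obtain ⟨hWC, hWk, hπ, hquota⟩ := h
  refine ⟨insert_subset hc'C ((erase_subset c W).trans hWC), ?_, fun i hi => ?_, fun d hd => ?_⟩
  · rw [card_insert_of_notMem (fun h => hc'W (mem_of_mem_erase h)), card_erase_add_one hc, hWk]
  · split_ifs with hic
    · exact mem_insert_self c' _
    · exact mem_insert_of_mem (mem_erase.mpr ⟨hic, hπ i hi⟩)
  · rcases mem_insert.mp hd with hd | hd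
    · rw [hd, ← hquota c hc]
      refine congrArg card (filter_congr fun i hi => ?_)
      split_ifs with hic
      · simp [hic]
      · have : π i ≠ c' := fun h => hc'W (h ▸ hπ i hi)
        simp [hic, this]
    · obtain ⟨hdc, hdW⟩ := mem_erase.mp hd
      have hc'd : c' ≠ d := fun h => hc'W (h ▸ hdW)
      rw [← hquota d hdW]
      refine congrArg card (filter_congr fun i _ => ?_)
      split_ifs with hic
      · simp [hic, Ne.symm hdc, hc'd]
      · rfl

theorem IsHareValid.exists_improvement [DecidableEq V] {A : V → Finset K}
    (h : IsHareValid N C k W π)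
    {c c' : K} (hc : c ∈ W) (hc'C : c' ∈ C) (hc'W : c' ∉ W) {S : Finset V} (hSN : S ⊆ N)
    (hSk : #S ≤ #N / k) (hSc' : ∀ i ∈ S, c' ∈ A i)
    (hSsat : Disjoint S (satisfiedVoters N A π)) :
    ∃ W' π', IsHareValid N C k W' π' ∧
      #S + #{i ∈ satisfiedVoters N A π | π i ≠ c} ≤ #(satisfiedVoters N A π') := by
  obtain ⟨σ, hσN, hσS, hσ⟩ := exists_perm_mapsTo_of_card_le hSN
    (filter_subset (π · = c) N) (hSk.trans_eq (h.card_fiber c hc).symm)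
  refine ⟨_, _, (h.comp_perm hσN).replace hc hc'C hc'W, ?_⟩
  rw [← card_union_of_disjoint (disjoint_of_subset_right (filter_subset _ _) hSsat)]
  refine card_le_card (union_subset (fun i hi => ?_) (fun i hi => ?_))
  · have : π (σ i) = c := (mem_filter.mp (hσS i hi)).2
    simpa [satisfiedVoters, this, hSN hi] using hSc' i hi
  · obtain ⟨hiT, hic⟩ := mem_filter.mp hi
    have hσi : σ i = i := hσ i (disjoint_right.mp hSsat hiT) (by simp [hic])
    simpa [satisfiedVoters, hσi, hic] using hiT

end Election

theorem stmt_13_general {V K : Type*} [DecidableEq V] [DecidableEq K]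
    (N : Finset V) (C : Finset K) (A : V → Finset K) (k : ℕ)
    (hA : ∀ i ∈ N, A i ⊆ C) (hdvd : k ∣ N.card)
    (W : Finset K) (π : V → K)
    (hWC : W ⊆ C) (hWcard : W.card = k)
    (hπ : ∀ i ∈ N, π i ∈ W)
    (hquota : ∀ c ∈ W, (N.filter (fun i => π i = c)).card = N.card / k)
    (hmax : ∀ (W' : Finset K) (π' : V → K), W' ⊆ C → W'.card = k →
      (∀ i ∈ N, π' i ∈ W') →
      (∀ c ∈ W', (N.filter (fun i => π' i = c)).card = N.card / k) →
      (N.filter (fun i => π' i ∈ A i)).card ≤ (N.filter (fun i => π i ∈ A i)).card) :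
    DroopJR N A k W := by
  intro S hSN hSlarge ⟨c', hSc'⟩
  by_contra! hSW
  set T := satisfiedVoters N A π with hT
  have hST : Disjoint S T := disjoint_left.mpr fun i hiS hiT =>
    hSW (π i) (hπ i (hSN hiS)) i hiS (mem_filter.mp hiT).2
  have hTlt : #T < #W * min #S (#N / k) := by
    rw [hWcard]
    refine Nat.lt_mul_min_of_lt_div_succ hdvd hSlarge ?_
    rw [← card_union_of_disjoint hST]
    exact card_le_card (union_subset hSN (filter_subset _ _))
  obtain ⟨c, hcW, hcT⟩ := exists_card_fiber_lt_of_card_lt_mul (f := π) hTlt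
  obtain ⟨S', hS'S, hS'card⟩ := exists_subset_card_eq (min_le_left #S (#N / k))
  obtain ⟨i₀, hi₀⟩ : S'.Nonempty := by
    rw [← card_pos, hS'card]; exact (Nat.zero_le _).trans_lt hcT
  have hc' : c' ∈ A i₀ := hSc' i₀ (hS'S hi₀)
  obtain ⟨W', π', hvalid, hscore⟩ := IsHareValid.exists_improvement (A := A)
    ⟨hWC, hWcard, hπ, hquota⟩ hcW (hA i₀ (hSN (hS'S hi₀)) hc')
    (fun h => hSW c' h i₀ (hS'S hi₀) hc') (hS'S.trans hSN) (hS'card ▸ min_le_right _ _)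
    (fun i hi => hSc' i (hS'S hi)) (disjoint_of_subset_left hS'S hST)
  rw [← hT] at hscore
  have hopt : #(satisfiedVoters N A π') ≤ #T :=
    hmax W' π' hvalid.subset hvalid.card_eq hvalid.mapsTo hvalid.card_fiber
  have hsplit : #{i ∈ T | π i = c} + #{i ∈ T | π i ≠ c} = #T :=
    card_filter_add_card_filter_not _
  omega

/-- Suppose `k ∣ n` and `(W, π)` is a Hare valid assignment
(`W ⊆ C`, `|W| = k`, `π : N → W` with every preimage class of size exactly
`n/k`) whose Monroe score is maximal among all Hare valid assignments.
Then `W` provides Droop-JR. -/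
theorem stmt_13 {V K : Type*} [DecidableEq V] [DecidableEq K]
    (N : Finset V) (C : Finset K) (A : V → Finset K) (k : ℕ)
    (hA : ∀ i ∈ N, A i ⊆ C) (hk : 1 ≤ k) (hdvd : k ∣ N.card)
    (W : Finset K) (π : V → K)
    (hWC : W ⊆ C) (hWcard : W.card = k)
    (hπ : ∀ i ∈ N, π i ∈ W)
    (hquota : ∀ c ∈ W, (N.filter (fun i => π i = c)).card = N.card / k)
    (hmax : ∀ (W' : Finset K) (π' : V → K), W' ⊆ C → W'.card = k →
      (∀ i ∈ N, π' i ∈ W') →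
      (∀ c ∈ W', (N.filter (fun i => π' i = c)).card = N.card / k) →
      (N.filter (fun i => π' i ∈ A i)).card ≤ (N.filter (fun i => π i ∈ A i)).card) :
    DroopJR N A k W :=
  stmt_13_general N C A k hA hdvd W π hWC hWcard hπ hquota hmax
end

section
/- Consider the approval election with n = 21 voters, k = 7, and candidates c₁, ..., c₉, where voters 1–16 each have ballot {c₁,...,c₆}, voters 17 and 18 have ballot {c₇}, voters 19 and 20 have ballot {c₈}, and voter 21 has ballot {c₉}. For every Droop valid assignment (W, π) whose Monroe score is maximal among all Droop valid assignments, the committee W does not provide Droop-PJR. -/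
/-- A group `S ⊆ N` is Droop `ℓ`-cohesive if `|⋂_{i∈S} A_i| ≥ ℓ` (expressed via
the candidates in `C` approved by every member of `S`) and `|S| > ℓ·n/(k+1)`.
An outcome `W` provides Droop-PJR if for every `ℓ ∈ {1,...,k}` and every Droop
`ℓ`-cohesive group `S`, we have `|(⋃_{i∈S} A_i) ∩ W| ≥ ℓ`. -/
def DroopPJR {V K : Type*} [DecidableEq V] [DecidableEq K]
    (N : Finset V) (C : Finset K) (A : V → Finset K) (k : ℕ) (W : Finset K) : Prop :=
  ∀ ℓ : ℕ, 1 ≤ ℓ → ℓ ≤ k → ∀ S ⊆ N,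
    ℓ ≤ (C.filter (fun c => ∀ i ∈ S, c ∈ A i)).card →
    (S.card : ℚ) > (ℓ : ℚ) * (N.card : ℚ) / ((k : ℚ) + 1) →
    ℓ ≤ ((S.biUnion A) ∩ W).card

/-- Ballots of the election of Statement 15: `n = 21`, `k = 7`, candidates
`c₁, ..., c₉` encoded as `0, ..., 8 : Fin 10`, with `9 : Fin 10` serving as the
dummy candidate `d ∉ C`; voters `1–16` approve `{c₁,...,c₆}`, voters `17, 18`
approve `{c₇}`, voters `19, 20` approve `{c₈}`, and voter `21` approves `{c₉}`. -/
def ballots15 : Fin 21 → Finset (Fin 10) := fun i =>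
  if (i : ℕ) < 16 then {0, 1, 2, 3, 4, 5}
  else if (i : ℕ) < 18 then {6}
  else if (i : ℕ) < 20 then {7}
  else {8}

/-- The candidate set of the election of Statement 15: all of `Fin 10` except
the dummy candidate `9`. -/
def candidates15 : Finset (Fin 10) := Finset.univ.erase 9

set_option maxRecDepth 100000
set_option maxHeartbeats 1000000

/-- In the election above (where `⌊n/(k+1)⌋ = ⌊21/8⌋ = 2` and
`⌈n/(k+1)⌉ = 3`), for every Droop valid assignment `(W, π)`—that is, `W ⊆ C`,
`|W| = 7`, `π : N → W ∪ {d}`, `2 ≤ |π⁻¹(c)| ≤ 3` for every `c ∈ W`, and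
`|π⁻¹(d)| = 2`—whose Monroe score is maximal among all Droop valid assignments,
the committee `W` does not provide Droop-PJR. -/
theorem stmt_15 (W : Finset (Fin 10)) (π : Fin 21 → Fin 10)
    (hWC : W ⊆ candidates15) (hWcard : W.card = 7)
    (hπ : ∀ i, π i ∈ insert (9 : Fin 10) W)
    (hquota : ∀ c ∈ W, 2 ≤ (Finset.univ.filter (fun i => π i = c)).card ∧
      (Finset.univ.filter (fun i => π i = c)).card ≤ 3)
    (hdummy : (Finset.univ.filter (fun i => π i = (9 : Fin 10))).card = 2)
    (hmax : ∀ (W' : Finset (Fin 10)) (π' : Fin 21 → Fin 10),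
      W' ⊆ candidates15 → W'.card = 7 →
      (∀ i, π' i ∈ insert (9 : Fin 10) W') →
      (∀ c ∈ W', 2 ≤ (Finset.univ.filter (fun i => π' i = c)).card ∧
        (Finset.univ.filter (fun i => π' i = c)).card ≤ 3) →
      (Finset.univ.filter (fun i => π' i = (9 : Fin 10))).card = 2 →
      (Finset.univ.filter (fun i => π' i ∈ ballots15 i)).card ≤
        (Finset.univ.filter (fun i => π i ∈ ballots15 i)).card) :
    ¬ DroopPJR (Finset.univ : Finset (Fin 21)) candidates15 ballots15 7 W := by
  intro hpjr
  -- Step 1: the Monroe score of π is at least 19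
  have hscore : 19 ≤ (Finset.univ.filter (fun i => π i ∈ ballots15 i)).card := by
    have h := hmax ({0,1,2,3,4,6,7} : Finset (Fin 10))
      ![0,0,0,1,1,1,2,2,2,3,3,3,4,4,4,9,6,6,7,7,9]
      (by decide) (by decide) (by decide) (by decide) (by decide)
    have h19 : (Finset.univ.filter (fun i =>
        (![0,0,0,1,1,1,2,2,2,3,3,3,4,4,4,9,6,6,7,7,9] : Fin 21 → Fin 10) i
          ∈ ballots15 i)).card = 19 := by decide
    omega
  -- Step 2: Droop-PJR forces {0,...,5} ⊆ W
  set S : Finset (Fin 21) := Finset.univ.filter (fun i : Fin 21 => (i : ℕ) < 16) with hSdef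
  have hcoh : (6 : ℕ) ≤ (candidates15.filter (fun c => ∀ i ∈ S, c ∈ ballots15 i)).card := by
    decide
  have hScard : S.card = 16 := by decide
  have hbig : (S.card : ℚ) > (6 : ℚ) * ((Finset.univ : Finset (Fin 21)).card : ℚ) / ((7 : ℚ) + 1) := by
    rw [hScard]
    norm_num
  have hP := hpjr 6 (by norm_num) (by norm_num) S (Finset.subset_univ _) hcoh hbig
  have hbi : S.biUnion ballots15 = ({0,1,2,3,4,5} : Finset (Fin 10)) := by decide
  rw [hbi] at hP
  have hsub : ({0,1,2,3,4,5} : Finset (Fin 10)) ⊆ W := by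
    have heq : ({0,1,2,3,4,5} : Finset (Fin 10)) ∩ W = ({0,1,2,3,4,5} : Finset (Fin 10)) := by
      apply Finset.eq_of_subset_of_card_le (Finset.inter_subset_left)
      have : ({0,1,2,3,4,5} : Finset (Fin 10)).card = 6 := by decide
      omega
    rw [← heq]
    exact Finset.inter_subset_right
  -- Step 3: W \ {0..5} is a singleton {t} with t ∈ {6,7,8}
  have h1 : (W \ ({0,1,2,3,4,5} : Finset (Fin 10))).card = 1 := by
    rw [Finset.card_sdiff_of_subset hsub]
    have : ({0,1,2,3,4,5} : Finset (Fin 10)).card = 6 := by decide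
    omega
  obtain ⟨t, ht⟩ := Finset.card_eq_one.mp h1
  have htmem : t ∈ ({6,7,8} : Finset (Fin 10)) := by
    have h2 : t ∈ W \ ({0,1,2,3,4,5} : Finset (Fin 10)) := by
      rw [ht]; exact Finset.mem_singleton_self t
    rw [Finset.mem_sdiff] at h2
    have aux : ∀ x : Fin 10, x ∉ ({0,1,2,3,4,5} : Finset (Fin 10)) →
        x ∈ candidates15 → x ∈ ({6,7,8} : Finset (Fin 10)) := by decide
    exact aux t h2.2 (hWC h2.1)
  have hnot : ∀ s : Fin 10, s ∈ ({6,7,8} : Finset (Fin 10)) → s ≠ t → s ∉ W := by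
    intro s hs hst hsW
    have : s ∈ W \ ({0,1,2,3,4,5} : Finset (Fin 10)) := by
      rw [Finset.mem_sdiff]
      refine ⟨hsW, ?_⟩
      have aux : ∀ x : Fin 10, x ∈ ({6,7,8} : Finset (Fin 10)) →
          x ∉ ({0,1,2,3,4,5} : Finset (Fin 10)) := by decide
      exact aux s hs
    rw [ht, Finset.mem_singleton] at this
    exact hst this
  -- key fact: a voter with singleton ballot {c}, c ∉ W, c ≠ 9, is unsatisfied
  have hbad : ∀ i : Fin 21, ∀ c : Fin 10, c ∉ W → c ≠ 9 → ballots15 i = {c} →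
      π i ∉ ballots15 i := by
    intro i c hc h9 hb hmem
    rw [hb, Finset.mem_singleton] at hmem
    have h := hπ i
    rw [hmem, Finset.mem_insert] at h
    rcases h with h | h
    · exact h9 h
    · exact hc h
  -- Step 4: the score is at most 18, contradiction
  have hle : (Finset.univ.filter (fun i => π i ∈ ballots15 i)).card ≤ 18 := by
    have htc : t = 6 ∨ t = 7 ∨ t = 8 := by
      have aux : ∀ x : Fin 10, x ∈ ({6,7,8} : Finset (Fin 10)) →
          x = 6 ∨ x = 7 ∨ x = 8 := by decide
      exact aux t htmem
    have key : ∃ a b c : Fin 21, a ≠ b ∧ a ≠ c ∧ b ≠ c ∧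
        π a ∉ ballots15 a ∧ π b ∉ ballots15 b ∧ π c ∉ ballots15 c := by
      rcases htc with rfl | rfl | rfl
      · exact ⟨18, 19, 20, by decide, by decide, by decide,
          hbad 18 7 (hnot 7 (by decide) (by decide)) (by decide) (by decide),
          hbad 19 7 (hnot 7 (by decide) (by decide)) (by decide) (by decide),
          hbad 20 8 (hnot 8 (by decide) (by decide)) (by decide) (by decide)⟩
      · exact ⟨16, 17, 20, by decide, by decide, by decide,
          hbad 16 6 (hnot 6 (by decide) (by decide)) (by decide) (by decide),
          hbad 17 6 (hnot 6 (by decide) (by decide)) (by decide) (by decide),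
          hbad 20 8 (hnot 8 (by decide) (by decide)) (by decide) (by decide)⟩
      · exact ⟨16, 17, 18, by decide, by decide, by decide,
          hbad 16 6 (hnot 6 (by decide) (by decide)) (by decide) (by decide),
          hbad 17 6 (hnot 6 (by decide) (by decide)) (by decide) (by decide),
          hbad 18 7 (hnot 7 (by decide) (by decide)) (by decide) (by decide)⟩
    obtain ⟨a, b, c, hab, hac, hbc, ha, hb, hc⟩ := key
    have hsub2 : (Finset.univ.filter (fun i => π i ∈ ballots15 i)) ⊆
        Finset.univ \ ({a, b, c} : Finset (Fin 21)) := by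
      intro i hi
      rw [Finset.mem_filter] at hi
      rw [Finset.mem_sdiff]
      refine ⟨Finset.mem_univ _, ?_⟩
      intro hmem
      rcases Finset.mem_insert.mp hmem with rfl | hmem
      · exact ha hi.2
      rcases Finset.mem_insert.mp hmem with rfl | hmem
      · exact hb hi.2
      rw [Finset.mem_singleton] at hmem
      subst hmem
      exact hc hi.2
    have := Finset.card_le_card hsub2
    have hcard3 : (Finset.univ \ ({a, b, c} : Finset (Fin 21))).card = 18 := by
      rw [Finset.card_sdiff_of_subset (Finset.subset_univ _)]
      have : ({a, b, c} : Finset (Fin 21)).card = 3 := by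
        rw [Finset.card_insert_of_notMem (by simp [hab, hac]),
            Finset.card_insert_of_notMem (by simp [hbc]), Finset.card_singleton]
      simp [this]
    omega
  omega
end

section
/- Consider the approval election with n = 3 voters, k = 1, and candidates a, b, where voters 1 and 2 have ballot {a} and voter 3 has ballot {b}. The committee W = {b} provides Hare-FJR and Hare-EJR+, but does not provide Droop-JR. -/
/-- A (nonempty) group `S ⊆ N` is Hare weakly `(ℓ,T)`-cohesive if `|A_i ∩ T| ≥ ℓ`
for every `i ∈ S` and `|S| ≥ |T|·n/k`.  An outcome `W` provides Hare-FJR if for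
every `ℓ ∈ {1,...,k}`, every `T ⊆ C`, and every Hare weakly `(ℓ,T)`-cohesive
group `S`, there exists `i ∈ S` with `|A_i ∩ W| ≥ ℓ`. -/
def HareFJR {V K : Type*} [DecidableEq K]
    (N : Finset V) (C : Finset K) (A : V → Finset K) (k : ℕ) (W : Finset K) : Prop :=
  ∀ ℓ : ℕ, 1 ≤ ℓ → ℓ ≤ k → ∀ T ⊆ C, ∀ S ⊆ N, S.Nonempty →
    (∀ i ∈ S, ℓ ≤ (A i ∩ T).card) →
    (S.card : ℚ) ≥ (T.card : ℚ) * (N.card : ℚ) / (k : ℚ) →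
    ∃ i ∈ S, ℓ ≤ (A i ∩ W).card

/-- An outcome `W` provides Hare-EJR+ if there is no `ℓ ∈ {1,...,k}`, group
`S ⊆ N` with `|S| ≥ ℓ·n/k`, and candidate `c ∈ (⋂_{i∈S} A_i) \ W` such that
`|A_i ∩ W| ≤ ℓ − 1` for every `i ∈ S`. -/
def HareEJRplus {V K : Type*} [DecidableEq K]
    (N : Finset V) (C : Finset K) (A : V → Finset K) (k : ℕ) (W : Finset K) : Prop :=
  ¬ ∃ ℓ : ℕ, 1 ≤ ℓ ∧ ℓ ≤ k ∧ ∃ S ⊆ N,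
      (S.card : ℚ) ≥ (ℓ : ℚ) * (N.card : ℚ) / (k : ℚ) ∧
      ∃ c ∈ C, c ∉ W ∧ (∀ i ∈ S, c ∈ A i) ∧ ∀ i ∈ S, (A i ∩ W).card ≤ ℓ - 1

/-- Ballots of the election of Statement 16: `n = 3`, `k = 1`, candidates
`a, b` encoded as `0, 1 : Fin 2`; voters `1, 2` approve `{a}`, voter `3`
approves `{b}`. -/
def ballots16 : Fin 3 → Finset (Fin 2) := fun i =>
  if (i : ℕ) < 2 then {0} else {1}

/-- In the election above, the committee `W = {b}` provides
Hare-FJR and Hare-EJR+, but does not provide Droop-JR. -/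
theorem stmt_16 :
    HareFJR (Finset.univ : Finset (Fin 3)) (Finset.univ : Finset (Fin 2))
      ballots16 1 ({1} : Finset (Fin 2)) ∧
    HareEJRplus (Finset.univ : Finset (Fin 3)) (Finset.univ : Finset (Fin 2))
      ballots16 1 ({1} : Finset (Fin 2)) ∧
    ¬ DroopJR (Finset.univ : Finset (Fin 3)) ballots16 1 ({1} : Finset (Fin 2)) := by
  refine ⟨?_, ?_, ?_⟩
  · intro ℓ h1 hk T hT S hS hSne hcoh hcard
    interval_cases ℓ
    rcases Finset.eq_empty_or_nonempty T with hT0 | hT0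
    · obtain ⟨i, hi⟩ := hSne
      have := hcoh i hi
      simp [hT0] at this
    · have hT1 : (1:ℚ) ≤ T.card := by exact_mod_cast Finset.card_pos.2 hT0
      have h3 : (3:ℚ) ≤ S.card := by
        have := hcard
        simp only [Finset.card_univ, Fintype.card_fin] at this
        nlinarith
    -- S.card ≥ 3
      have hS3 : 3 ≤ S.card := by exact_mod_cast h3
      have hSu : S = Finset.univ := Finset.eq_univ_of_card S
        (le_antisymm (by simpa using Finset.card_le_univ S) hS3)
      refine ⟨2, by simp [hSu], ?_⟩
      decide
  · rintro ⟨ℓ, h1, hk, S, hS, hcard, c, hcC, hcW, hcA, hbound⟩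
    interval_cases ℓ
    have h3 : (3:ℚ) ≤ S.card := by
      simp only [Finset.card_univ, Fintype.card_fin] at hcard
      linarith
    have hS3 : 3 ≤ S.card := by exact_mod_cast h3
    have hSu : S = Finset.univ := Finset.eq_univ_of_card S
      (le_antisymm (by simpa using Finset.card_le_univ S) hS3)
    subst hSu
    have h0 := hcA 0 (Finset.mem_univ _)
    have h2 := hcA 2 (Finset.mem_univ _)
    simp [ballots16] at h0 h2
    subst h0
    exact absurd h2 (by decide)
  · intro h
    have := h ({0,1} : Finset (Fin 3)) (Finset.subset_univ _)
      (by norm_num) ⟨0, by decide⟩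
    obtain ⟨c, hcW, i, hi, hci⟩ := this
    fin_cases i <;> simp_all [ballots16]
end
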